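/- arXiv:1502.01840 — 5 statements merged into one kernel-verified Lean document; each statement's English description precedes it below -/
import Mathlib

section
/- Let (A_ε)_{ε≥0} be self-adjoint operators on X with common domain X_1 compactly embedded in X, satisfying m_0⟨A_0ψ,ψ⟩ ≤ ⟨A_εψ,ψ⟩ ≤ m_1⟨A_0ψ,ψ⟩ with A_0 strictly positive, and suppose A_ε^{-1}ψ → A_0^{-1}ψ strongly in X for every ψ ∈ X. If ψ_ε → ψ_0 strongly in X, then for every τ > 0 the trajectories t ↦ T^ε_t ψ_ε converge to t ↦ T^0_t ψ_0 in C([0,τ];X), where T^ε is the contraction semigroup generated by -A_ε. -/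
/-!
Write `R_ε = A_ε⁻¹` (as an operator on `X`). Positivity of `R₀` gives
`‖R₀ v‖² ≤ ‖R₀‖ ⟪R₀ v, v⟫`, i.e. `‖φ‖² ≤ ‖R₀‖ ⟪A₀ φ, φ⟫`; with `m₀ A₀ ≤ A_ε` this bounds
`‖R_ε‖ ≤ ‖R₀‖ / m₀`, so the strong convergence `R_ε → R₀` is uniform on compact sets, in
particular on the orbits `{T⁰_s v : s ∈ [0, τ]}`. For data `y = R₀ x` with `x = R₀ z` the
semigroup `T⁰` commutes with `R₀`, and Duhamel's formula for `s ↦ T^ε_{t-s} R_ε T⁰_s x` gives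
`‖R_ε T⁰_t x - T^ε_t R_ε x‖ ≤ t · sup_{s ≤ τ} ‖(R₀ - R_ε) T⁰_s z‖`, so `T^ε_t R_ε x → T⁰_t y`
uniformly on `[0, τ]`. Since `R₀` is symmetric and injective, such `y` are dense, and the
contraction bounds carry the convergence over to arbitrary data `ψ_ε → ψ₀`.
-/

open Filter Set Asymptotics
open scoped RealInnerProductSpace

section Positive

variable {E : Type*} [NormedAddCommGroup E] [InnerProductSpace ℝ E]

theorem ContinuousLinearMap.IsPositive.inner_sq_le {T : E →L[ℝ] E} (hT : T.IsPositive)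
    (x y : E) : ⟪T x, y⟫ ^ 2 ≤ ⟪T x, x⟫ * ⟪T y, y⟫ := by
  have hquad : ∀ t : ℝ, 0 ≤ ⟪T y, y⟫ * (t * t) + 2 * ⟪T x, y⟫ * t + ⟪T x, x⟫ := by
    intro t
    have hyx : ⟪T y, x⟫ = ⟪T x, y⟫ := by
      rw [hT.inner_left_eq_inner_right, real_inner_comm]
    have := hT.inner_nonneg_left (x + t • y)
    simp only [map_add, map_smul, inner_add_left, inner_add_right, real_inner_smul_left,
      real_inner_smul_right, hyx] at this
    linarith
  have := discrim_le_zero hquad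
  rw [discrim] at this
  linarith

theorem ContinuousLinearMap.IsPositive.norm_apply_sq_le {T : E →L[ℝ] E} (hT : T.IsPositive)
    (x : E) : ‖T x‖ ^ 2 ≤ ‖T‖ * ⟪T x, x⟫ := by
  rcases (sq_nonneg ‖T x‖).eq_or_lt with h | h
  · rw [← h]
    exact mul_nonneg (norm_nonneg T) (hT.inner_nonneg_left x)
  refine le_of_mul_le_mul_right ?_ h
  calc ‖T x‖ ^ 2 * ‖T x‖ ^ 2 = ⟪T x, T x⟫ ^ 2 := by rw [real_inner_self_eq_norm_sq]; ring
    _ ≤ ⟪T x, x⟫ * ⟪T (T x), T x⟫ := hT.inner_sq_le x (T x)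
    _ ≤ ⟪T x, x⟫ * (‖T‖ * ‖T x‖ ^ 2) := by
      gcongr
      · exact hT.inner_nonneg_left x
      · calc ⟪T (T x), T x⟫ ≤ ‖T (T x)‖ * ‖T x‖ := real_inner_le_norm _ _
          _ ≤ ‖T‖ * ‖T x‖ * ‖T x‖ := by gcongr; exact T.le_opNorm _
          _ = ‖T‖ * ‖T x‖ ^ 2 := by ring
    _ = ‖T‖ * ⟪T x, x⟫ * ‖T x‖ ^ 2 := by ring

theorem LinearMap.IsSymmetric.denseRange_comp_self {𝕜 F : Type*} [RCLike 𝕜]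
    [NormedAddCommGroup F] [InnerProductSpace 𝕜 F] [CompleteSpace F] {T : F →L[𝕜] F}
    (hT : (T : F →ₗ[𝕜] F).IsSymmetric) (hinj : Function.Injective T) :
    DenseRange (T ∘L T) := by
  change Dense (LinearMap.range (T ∘L T : F →ₗ[𝕜] F) : Set F)
  rw [Submodule.dense_iff_topologicalClosure_eq_top, Submodule.topologicalClosure_eq_top_iff,
    Submodule.eq_bot_iff]
  intro x hx
  have hTx : inner 𝕜 (T x) (T x) = 0 := by
    rw [← hT.apply_clm (T x) x]
    exact (Submodule.mem_orthogonal _ x).mp hx _ ⟨x, rfl⟩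
  exact hinj (by rw [map_zero]; exact inner_self_eq_zero.mp hTx)

end Positive

section Resolvent

variable {X X₁ : Type*} [NormedAddCommGroup X] [InnerProductSpace ℝ X] [NormedAddCommGroup X₁]
  [NormedSpace ℝ X₁] {ι B : X₁ →L[ℝ] X} {Binv : X →L[ℝ] X₁}

theorem isPositive_comp_of_rightInverse (hB : ∀ x, B (Binv x) = x)
    (hsym : ∀ ψ φ, ⟪B ψ, ι φ⟫ = ⟪ι ψ, B φ⟫) (hnonneg : ∀ ψ, 0 ≤ ⟪B ψ, ι ψ⟫) :
    (ι ∘L Binv).IsPositive := by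
  rw [ContinuousLinearMap.isPositive_iff]
  refine ⟨fun x y => ?_, fun x => ?_⟩
  · change ⟪ι (Binv x), y⟫ = ⟪x, ι (Binv y)⟫
    conv_rhs => rw [← hB x]
    conv_lhs => rw [← hB y]
    rw [hsym, real_inner_comm]
  · have := hnonneg (Binv x)
    rwa [hB, real_inner_comm] at this

theorem norm_sq_le_opNorm_comp_mul_inner (hpos : (ι ∘L Binv).IsPositive)
    (hB : ∀ ψ, Binv (B ψ) = ψ) (φ : X₁) : ‖ι φ‖ ^ 2 ≤ ‖ι ∘L Binv‖ * ⟪B φ, ι φ⟫ := by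
  simpa [hB, real_inner_comm] using hpos.norm_apply_sq_le (B φ)

theorem opNorm_comp_le_of_coercive (hB : ∀ x, B (Binv x) = x) {m C : ℝ} (hm : 0 < m)
    (hC : 0 ≤ C) (hcoer : ∀ φ, m * ‖ι φ‖ ^ 2 ≤ C * ⟪B φ, ι φ⟫) : ‖ι ∘L Binv‖ ≤ C / m := by
  refine ContinuousLinearMap.opNorm_le_bound _ (by positivity) fun x => ?_
  set y := ι (Binv x)
  have : m * ‖y‖ ^ 2 ≤ C * ‖x‖ * ‖y‖ := by
    calc m * ‖y‖ ^ 2 ≤ C * ⟪x, y⟫ := by simpa [hB] using hcoer (Binv x)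
      _ ≤ C * (‖x‖ * ‖y‖) := by gcongr; exact real_inner_le_norm x y
      _ = C * ‖x‖ * ‖y‖ := by ring
  change ‖y‖ ≤ C / m * ‖x‖
  rw [div_mul_eq_mul_div, le_div_iff₀ hm]
  rcases (norm_nonneg y).eq_or_lt with hy | hy
  · rw [← hy, zero_mul]; positivity
  · exact le_of_mul_le_mul_right (by linarith) hy

end Resolvent

theorem ContinuousLinearMap.tendstoUniformlyOn_of_tendsto {𝕜 E F ι : Type*}
    [NontriviallyNormedField 𝕜] [NormedAddCommGroup E] [NormedSpace 𝕜 E] [NormedAddCommGroup F]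
    [NormedSpace 𝕜 F] {l : Filter ι} {T : ι → E →L[𝕜] F} {T₀ : E →L[𝕜] F} {C : ℝ}
    (hC : ∀ᶠ i in l, ‖T i‖ ≤ C) (hT : ∀ x, Tendsto (fun i => T i x) l (nhds (T₀ x)))
    {K : Set E} (hK : IsCompact K) : TendstoUniformlyOn (fun i x => T i x) T₀ l K := by
  rw [← tendstoLocallyUniformlyOn_iff_tendstoUniformlyOn_of_compact hK,
    Metric.tendstoLocallyUniformlyOn_iff]
  intro δ hδ x _
  set r := δ / 2 / (‖T₀‖ + |C| + 1)
  have hr : 0 < r := by positivity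
  have hrδ : (‖T₀‖ + |C|) * r ≤ δ / 2 := by
    calc (‖T₀‖ + |C|) * r ≤ (‖T₀‖ + |C| + 1) * r :=
          mul_le_mul_of_nonneg_right (by linarith) hr.le
      _ = δ / 2 := mul_div_cancel₀ _ (by positivity)
  refine ⟨Metric.ball x r, mem_nhdsWithin_of_mem_nhds (Metric.ball_mem_nhds x hr), ?_⟩
  filter_upwards [hC, (hT x).eventually (Metric.ball_mem_nhds (T₀ x) (half_pos hδ))]
    with i hCi hxi y hy
  rw [Metric.mem_ball, dist_eq_norm] at hy
  rw [dist_comm, dist_eq_norm] at hxi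
  rw [dist_eq_norm]
  calc ‖T₀ y - T i y‖ = ‖T₀ (y - x) + (T₀ x - T i x) + T i (x - y)‖ := by
        simp only [map_sub]; congr 1; abel
    _ ≤ ‖T₀ (y - x)‖ + ‖T₀ x - T i x‖ + ‖T i (x - y)‖ := norm_add₃_le
    _ ≤ ‖T₀‖ * r + ‖T₀ x - T i x‖ + |C| * r := by
      gcongr
      · exact T₀.le_of_opNorm_le_of_le le_rfl hy.le
      · rw [norm_sub_rev] at hy
        exact (T i).le_of_opNorm_le_of_le (hCi.trans (le_abs_self C)) hy.le
    _ < δ := by linarith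

theorem tendstoUniformlyOn_apply_of_dense {E F α β : Type*} [NormedAddCommGroup E]
    [NormedSpace ℝ E] [NormedAddCommGroup F] [NormedSpace ℝ F] {l : Filter α} {s : Set β}
    {U : α → β → E →L[ℝ] F} {U₀ : β → E →L[ℝ] F} (hU : ∀ᶠ i in l, ∀ b ∈ s, ‖U i b‖ ≤ 1)
    (hU₀ : ∀ b ∈ s, ‖U₀ b‖ ≤ 1) {D : Set E} (hD : Dense D)
    (happrox : ∀ y ∈ D, ∃ y' : α → E, Tendsto y' l (nhds y) ∧
      TendstoUniformlyOn (fun i b => U i b (y' i)) (fun b => U₀ b y) l s)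
    {ψ : α → E} {ψ₀ : E} (hψ : Tendsto ψ l (nhds ψ₀)) :
    TendstoUniformlyOn (fun i b => U i b (ψ i)) (fun b => U₀ b ψ₀) l s := by
  rw [Metric.tendstoUniformlyOn_iff]
  intro δ hδ
  obtain ⟨y, hyD, hy⟩ := hD.exists_dist_lt ψ₀ (by positivity : 0 < δ / 3)
  obtain ⟨y', hy'y, hy'⟩ := happrox y hyD
  filter_upwards [hU, (hψ.dist hy'y).eventually (gt_mem_nhds hy),
    Metric.tendstoUniformlyOn_iff.mp hy' (δ / 3) (by positivity)] with i hUi hψi hy'i b hb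
  calc dist (U₀ b ψ₀) (U i b (ψ i))
      ≤ dist (U₀ b ψ₀) (U₀ b y) + dist (U₀ b y) (U i b (y' i))
          + dist (U i b (y' i)) (U i b (ψ i)) := dist_triangle4 _ _ _ _
    _ ≤ dist ψ₀ y + dist (U₀ b y) (U i b (y' i)) + dist (y' i) (ψ i) := by
        gcongr
        · exact ((U₀ b).dist_le_opNorm _ _).trans (mul_le_of_le_one_left dist_nonneg (hU₀ b hb))
        · exact ((U i b).dist_le_opNorm _ _).trans (mul_le_of_le_one_left dist_nonneg (hUi b hb))
    _ < δ / 3 + δ / 3 + δ / 3 := by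
        gcongr
        · exact hy'i b hb
        · rwa [dist_comm]
    _ = δ := by ring

theorem HasDerivWithinAt.clm_apply_of_norm_le {E F : Type*} [NormedAddCommGroup E]
    [NormedSpace ℝ E] [NormedAddCommGroup F] [NormedSpace ℝ F] {S : ℝ → E →L[ℝ] F}
    {g : ℝ → E} {s : Set ℝ} {u₀ C : ℝ} {f' : F} {g' : E} (hbound : ∀ u ∈ s, ‖S u‖ ≤ C)
    (hcont : ContinuousWithinAt (fun u => S u g') s u₀)
    (hS : HasDerivWithinAt (fun u => S u (g u₀)) f' s u₀) (hg : HasDerivWithinAt g g' s u₀) :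
    HasDerivWithinAt (fun u => S u (g u)) (f' + S u₀ g') s u₀ := by
  rw [hasDerivWithinAt_iff_isLittleO] at hS hg ⊢
  have hremainder : (fun u => S u (g u - g u₀ - (u - u₀) • g')) =o[nhdsWithin u₀ s]
      fun u => u - u₀ := by
    refine IsBigO.trans_isLittleO (IsBigO.of_bound C ?_) hg
    filter_upwards [self_mem_nhdsWithin] with u hu
    exact (S u).le_of_opNorm_le (hbound u hu) _
  have hvariation : (fun u => (u - u₀) • (S u g' - S u₀ g')) =o[nhdsWithin u₀ s]
      fun u => u - u₀ := by
    have hsmall : (fun u => S u g' - S u₀ g') =o[nhdsWithin u₀ s] fun _ => (1 : ℝ) :=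
      (isLittleO_one_iff ℝ).mpr (tendsto_sub_nhds_zero_iff.mpr hcont)
    simpa using (isBigO_refl (fun u => u - u₀) (nhdsWithin u₀ s)).smul_isLittleO hsmall
  refine ((hS.add hremainder).add hvariation).congr_left fun u => ?_
  simp only [map_sub, map_smul, smul_add, smul_sub]
  abel

section Semigroup

variable {E : Type*} [NormedAddCommGroup E] [NormedSpace ℝ E]

structure IsContractionSemigroup (S : ℝ → E →L[ℝ] E) : Prop where
  zero : S 0 = 1
  add : ∀ s t, 0 ≤ s → 0 ≤ t → S (s + t) = S s ∘L S t
  continuous_apply : ∀ x, Continuous fun t => S t x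
  norm_le_one : ∀ t, 0 ≤ t → ‖S t‖ ≤ 1

/-- `R = A⁻¹` for the generator `-A` of `S`: `d/ds S s (R y) = -S s (A (R y)) = -S s y`. -/
def IsInvNegGenerator (S : ℝ → E →L[ℝ] E) (R : E →L[ℝ] E) : Prop :=
  ∀ y t, 0 ≤ t → HasDerivAt (fun s => S s (R y)) (-(S t y)) t

namespace IsContractionSemigroup

variable {S : ℝ → E →L[ℝ] E} {R : E →L[ℝ] E}

theorem norm_apply_le (hS : IsContractionSemigroup S) {t : ℝ} (ht : 0 ≤ t) (x : E) :
    ‖S t x‖ ≤ ‖x‖ :=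
  (S t).le_of_opNorm_le (hS.norm_le_one t ht) x |>.trans_eq (one_mul _)

theorem eq_zero_of_forall_apply_eq (hS : IsContractionSemigroup S) (hR : IsInvNegGenerator S R)
    {G : E} (hG : ∀ t, 0 ≤ t → S t G = G) : G = 0 := by
  -- `S t (R G)` stays bounded, while it moves linearly with velocity `-G`.
  have hlin : ∀ t, 0 ≤ t → S t (R G) = R G - t • G := by
    intro t ht
    refine eq_of_has_deriv_right_eq (f := fun u => S u (R G)) (g := fun u => R G - u • G)
      (a := 0) (b := t) (f' := fun _ => -G) (fun u hu => ?_)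
      (fun u _ => ?_) ?_ ?_ (by simp [hS.zero]) t (right_mem_Icc.mpr ht)
    · simpa [hG u hu.1] using (hR G u hu.1).hasDerivWithinAt
    · simpa using ((hasDerivAt_id u).smul_const G).const_sub (R G) |>.hasDerivWithinAt
    · exact fun u hu => (hR G u hu.1).continuousAt.continuousWithinAt
    · fun_prop
  by_contra hG0
  have hpos : 0 < ‖G‖ := norm_pos_iff.mpr hG0
  set t := (2 * ‖R G‖ + 1) / ‖G‖
  have ht : 0 ≤ t := by positivity
  have : t * ‖G‖ ≤ 2 * ‖R G‖ := by
    calc t * ‖G‖ = ‖R G - S t (R G)‖ := by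
          rw [hlin t ht, sub_sub_cancel, norm_smul, Real.norm_of_nonneg ht]
      _ ≤ ‖R G‖ + ‖R G‖ := (norm_sub_le _ _).trans (add_le_add_right (hS.norm_apply_le ht _) _)
      _ = 2 * ‖R G‖ := by ring
  rw [div_mul_cancel₀ _ hpos.ne'] at this
  linarith

theorem apply_comm (hS : IsContractionSemigroup S) (hR : IsInvNegGenerator S R) {r : ℝ}
    (hr : 0 ≤ r) (y : E) : S r (R y) = R (S r y) := by
  set G := R (S r y) - S r (R y)
  suffices ∀ t, 0 ≤ t → S t G = G from
    (sub_eq_zero.mp (hS.eq_zero_of_forall_apply_eq hR this)).symm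
  intro t ht
  -- `u ↦ S u (R (S r y)) - S (u + r) (R y)` has zero derivative and equals `S u G`.
  have hderiv : ∀ u, 0 ≤ u →
      HasDerivAt (fun u => S u (R (S r y)) - S (u + r) (R y)) 0 u := by
    intro u hu
    have := (hR (S r y) u hu).sub ((hR y (u + r) (by positivity)).comp_add_const u r)
    rwa [hS.add u r hu hr, ContinuousLinearMap.comp_apply, neg_sub_neg, sub_self] at this
  have := constant_of_has_deriv_right_zero (a := 0) (b := t)
    (fun u hu => (hderiv u hu.1).continuousAt.continuousWithinAt)
    (fun u hu => (hderiv u hu.1).hasDerivWithinAt) t (right_mem_Icc.mpr ht)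
  simpa [hS.zero, hS.add t r ht hr, G] using this

theorem norm_apply_sub_apply_le (hS : IsContractionSemigroup S) (hR : IsInvNegGenerator S R)
    {c c' : ℝ → E} {t K : ℝ} (ht : 0 ≤ t)
    (hc : ∀ s ∈ Icc 0 t, HasDerivWithinAt c (c' s) (Icc 0 t) s)
    (hK : ∀ s ∈ Ico 0 t, ‖c s + R (c' s)‖ ≤ K) :
    ‖R (c t) - S t (R (c 0))‖ ≤ K * t := by
  -- Mean value inequality for `s ↦ S (t - s) (R (c s))` on `[0, t]`.
  have hderiv : ∀ s ∈ Icc 0 t, HasDerivWithinAt (fun s => S (t - s) (R (c s)))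
      (S (t - s) (c s + R (c' s))) (Icc 0 t) s := by
    intro s hs
    rw [map_add]
    refine HasDerivWithinAt.clm_apply_of_norm_le (C := 1)
      (fun u hu => hS.norm_le_one _ (sub_nonneg.mpr hu.2))
      ((hS.continuous_apply _).comp (continuous_sub_left t)).continuousWithinAt ?_
      (R.hasFDerivAt.comp_hasDerivWithinAt s (hc s hs))
    simpa using ((hR (c s) (t - s) (sub_nonneg.mpr hs.2)).comp_const_sub t s).hasDerivWithinAt
  have := norm_image_sub_le_of_norm_deriv_le_segment' hderiv
    (fun s hs => (hS.norm_apply_le (sub_nonneg.mpr hs.2.le) _).trans (hK s hs)) t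
    (right_mem_Icc.mpr ht)
  simpa [hS.zero] using this

end IsContractionSemigroup

variable {α : Type*} {l : Filter α} {S : α → ℝ → E →L[ℝ] E} {S₀ : ℝ → E →L[ℝ] E}
  {R : α → E →L[ℝ] E} {R₀ : E →L[ℝ] E} {M : ℝ}

theorem tendstoUniformlyOn_semigroup_apply_resolvent_sq
    (hS : ∀ᶠ i in l, IsContractionSemigroup (S i) ∧ IsInvNegGenerator (S i) (R i))
    (hM : ∀ᶠ i in l, ‖R i‖ ≤ M) (hS₀ : IsContractionSemigroup S₀) (hR₀ : IsInvNegGenerator S₀ R₀)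
    (hR : ∀ x, Tendsto (fun i => R i x) l (nhds (R₀ x))) (z : E) (τ : ℝ) :
    TendstoUniformlyOn (fun i t => S i t (R i (R₀ z))) (fun t => S₀ t (R₀ (R₀ z))) l
      (Icc 0 τ) := by
  set x := R₀ z
  have hunif : ∀ v, TendstoUniformlyOn (fun i s => R i (S₀ s v)) (fun s => R₀ (S₀ s v)) l
      (Icc 0 τ) := fun v =>
    (((ContinuousLinearMap.tendstoUniformlyOn_of_tendsto hM hR
      (isCompact_Icc.image (hS₀.continuous_apply v))).comp fun s => S₀ s v)).mono
      (subset_preimage_image _ _)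
  rw [Metric.tendstoUniformlyOn_iff]
  intro δ hδ
  set K := δ / 2 / (|τ| + 1)
  have hK : 0 < K := by positivity
  have hKτ : K * |τ| ≤ δ / 2 := by
    calc K * |τ| ≤ K * (|τ| + 1) := mul_le_mul_of_nonneg_left (by linarith) hK.le
      _ = δ / 2 := div_mul_cancel₀ _ (by positivity)
  filter_upwards [hS, Metric.tendstoUniformlyOn_iff.mp (hunif x) (δ / 2) (half_pos hδ),
    Metric.tendstoUniformlyOn_iff.mp (hunif z) K hK] with i ⟨hSi, hRi⟩ hx hz t ht
  -- Duhamel's formula along the orbit `s ↦ S₀ s x`, whose derivative is `-S₀ s z`.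
  have hduhamel : ‖R i (S₀ t x) - S i t (R i x)‖ ≤ K * t := by
    have := hSi.norm_apply_sub_apply_le hRi ht.1 (c := fun s => S₀ s x)
      (c' := fun s => -S₀ s z) (K := K) (fun s hs => (hR₀ z s hs.1).hasDerivWithinAt)
      (fun s hs => ?_)
    · simpa [hS₀.zero] using this
    rw [map_neg, ← sub_eq_add_neg, hS₀.apply_comm hR₀ hs.1, ← dist_eq_norm]
    exact (hz s ⟨hs.1, hs.2.le.trans ht.2⟩).le
  calc dist (S₀ t (R₀ x)) (S i t (R i x))
      ≤ dist (R₀ (S₀ t x)) (R i (S₀ t x)) + dist (R i (S₀ t x)) (S i t (R i x)) := by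
        rw [hS₀.apply_comm hR₀ ht.1]; exact dist_triangle _ _ _
    _ < δ / 2 + δ / 2 := by
        refine add_lt_add_of_lt_of_le (hx t ht) ?_
        rw [dist_eq_norm]
        exact hduhamel.trans ((mul_le_mul_of_nonneg_left (ht.2.trans (le_abs_self τ)) hK.le).trans
          hKτ)
    _ = δ := add_halves δ

theorem tendstoUniformlyOn_semigroup_apply
    (hS : ∀ᶠ i in l, IsContractionSemigroup (S i) ∧ IsInvNegGenerator (S i) (R i))
    (hM : ∀ᶠ i in l, ‖R i‖ ≤ M) (hS₀ : IsContractionSemigroup S₀) (hR₀ : IsInvNegGenerator S₀ R₀)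
    (hR : ∀ x, Tendsto (fun i => R i x) l (nhds (R₀ x))) (hdense : DenseRange (R₀ ∘L R₀))
    {ψ : α → E} {ψ₀ : E} (hψ : Tendsto ψ l (nhds ψ₀)) (τ : ℝ) :
    TendstoUniformlyOn (fun i t => S i t (ψ i)) (fun t => S₀ t ψ₀) l (Icc 0 τ) := by
  refine tendstoUniformlyOn_apply_of_dense (hS.mono fun i hi t ht => hi.1.norm_le_one t ht.1)
    (fun t ht => hS₀.norm_le_one t ht.1) hdense ?_ hψ
  rintro _ ⟨z, rfl⟩
  exact ⟨fun i => R i (R₀ z), hR (R₀ z),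
    tendstoUniformlyOn_semigroup_apply_resolvent_sq hS hM hS₀ hR₀ hR z τ⟩

end Semigroup

theorem stmt2_general {X X₁ : Type*}
    [NormedAddCommGroup X] [InnerProductSpace ℝ X] [CompleteSpace X]
    [NormedAddCommGroup X₁] [NormedSpace ℝ X₁]
    -- (C1): common domain `X₁` compactly embedded in `X`, each `A_ε` self-adjoint
    (ι : X₁ →L[ℝ] X)
    (A : ℝ → X₁ →L[ℝ] X)
    (hsa : ∀ ε : ℝ, 0 ≤ ε → ∀ ψ φ : X₁, ⟪A ε ψ, ι φ⟫ = ⟪ι ψ, A ε φ⟫)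
    -- (C2): `A₀` strictly positive and `m₀⟨A₀ψ,ψ⟩ ≤ ⟨A_εψ,ψ⟩ ≤ m₁⟨A₀ψ,ψ⟩`
    (m₀ m₁ : ℝ) (hm₀ : 0 < m₀)
    (hpos : ∀ ψ : X₁, ψ ≠ 0 → 0 < ⟪A 0 ψ, ι ψ⟫)
    (hcomp : ∀ ε : ℝ, 0 ≤ ε → ∀ ψ : X₁,
      m₀ * ⟪A 0 ψ, ι ψ⟫ ≤ ⟪A ε ψ, ι ψ⟫ ∧ ⟪A ε ψ, ι ψ⟫ ≤ m₁ * ⟪A 0 ψ, ι ψ⟫)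
    -- (C3): strong convergence of the resolvents `A_ε⁻¹ψ → A₀⁻¹ψ`
    (Ainv : ℝ → X →L[ℝ] X₁)
    (hAinv : ∀ ε : ℝ, 0 ≤ ε → (∀ x : X, A ε (Ainv ε x) = x) ∧ ∀ ψ : X₁, Ainv ε (A ε ψ) = ψ)
    (hres : ∀ x : X, Tendsto (fun ε => ι (Ainv ε x)) (nhdsWithin 0 (Set.Ioi 0))
      (nhds (ι (Ainv 0 x))))
    -- `T^ε` is the contraction semigroup generated by `-A_ε`
    (T : ℝ → ℝ → X →L[ℝ] X)
    (hT0 : ∀ ε : ℝ, 0 ≤ ε → T ε 0 = 1)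
    (hTadd : ∀ ε : ℝ, 0 ≤ ε → ∀ s t : ℝ, 0 ≤ s → 0 ≤ t → T ε (s + t) = (T ε s).comp (T ε t))
    (hTcont : ∀ ε : ℝ, 0 ≤ ε → ∀ x : X, Continuous fun t => T ε t x)
    (hTcontr : ∀ ε : ℝ, 0 ≤ ε → ∀ t : ℝ, 0 ≤ t → ‖T ε t‖ ≤ 1)
    (hgen : ∀ ε : ℝ, 0 ≤ ε → ∀ ψ : X₁, ∀ t : ℝ, 0 ≤ t →
      HasDerivAt (fun s => T ε s (ι ψ)) (-(T ε t (A ε ψ))) t)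
    -- `ψ_ε → ψ_0` strongly in `X`
    (ψ : ℝ → X) (hψ : Tendsto ψ (nhdsWithin 0 (Set.Ioi 0)) (nhds (ψ 0))) :
    ∀ τ : ℝ, 0 < τ → TendstoUniformlyOn (fun ε t => T ε t (ψ ε)) (fun t => T 0 t (ψ 0))
      (nhdsWithin 0 (Set.Ioi 0)) (Set.Icc 0 τ) := by
  intro τ _
  set R : ℝ → X →L[ℝ] X := fun ε => ι ∘L Ainv ε
  have hnonneg : ∀ φ, 0 ≤ ⟪A 0 φ, ι φ⟫ := fun φ => by
    rcases eq_or_ne φ 0 with rfl | hφ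
    · simp
    · exact (hpos φ hφ).le
  have hR₀ : (R 0).IsPositive :=
    isPositive_comp_of_rightInverse (hAinv 0 le_rfl).1 (hsa 0 le_rfl) hnonneg
  have hι : Function.Injective ι := (injective_iff_map_eq_zero ι).mpr fun φ hφ => by
    by_contra h
    simpa [hφ] using hpos φ h
  have hR₀inj : Function.Injective (R 0) :=
    hι.comp (Function.LeftInverse.injective (hAinv 0 le_rfl).1)
  have hbound : ∀ ε, 0 ≤ ε → ‖R ε‖ ≤ ‖R 0‖ / m₀ := fun ε hε =>
    opNorm_comp_le_of_coercive (hAinv ε hε).1 hm₀ (norm_nonneg _) fun φ => by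
      calc m₀ * ‖ι φ‖ ^ 2 ≤ m₀ * (‖R 0‖ * ⟪A 0 φ, ι φ⟫) := by
            gcongr; exact norm_sq_le_opNorm_comp_mul_inner hR₀ (hAinv 0 le_rfl).2 φ
        _ = ‖R 0‖ * (m₀ * ⟪A 0 φ, ι φ⟫) := by ring
        _ ≤ ‖R 0‖ * ⟪A ε φ, ι φ⟫ := by gcongr; exact (hcomp ε hε φ).1
  have hsemi : ∀ ε, 0 ≤ ε → IsContractionSemigroup (T ε) := fun ε hε =>
    ⟨hT0 ε hε, hTadd ε hε, hTcont ε hε, hTcontr ε hε⟩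
  have hgenR : ∀ ε, 0 ≤ ε → IsInvNegGenerator (T ε) (R ε) := fun ε hε y t ht => by
    simpa [R, (hAinv ε hε).1 y] using hgen ε hε (Ainv ε y) t ht
  have hε : ∀ᶠ ε in nhdsWithin (0 : ℝ) (Set.Ioi 0), 0 ≤ ε :=
    eventually_nhdsWithin_of_forall fun ε hε => le_of_lt hε
  exact tendstoUniformlyOn_semigroup_apply (hε.mono fun ε hε => ⟨hsemi ε hε, hgenR ε hε⟩)
    (hε.mono hbound) (hsemi 0 le_rfl) (hgenR 0 le_rfl) hres
    (LinearMap.IsSymmetric.denseRange_comp_self hR₀.isSymmetric hR₀inj) hψ τ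

/-- Under assumptions (C1)-(C3) on the family `(A_ε)` (self-adjoint operators
with common domain `X₁` compactly embedded in `X`, uniform comparability with the strictly
positive `A₀`, and strong resolvent convergence), if `ψ_ε → ψ_0` strongly in `X`, then for
every `τ > 0` the trajectories `t ↦ T^ε_t ψ_ε` converge to `t ↦ T^0_t ψ_0` in `C([0,τ];X)`. -/
theorem stmt2 {X X₁ U : Type*}
    [NormedAddCommGroup X] [InnerProductSpace ℝ X] [CompleteSpace X]
    [NormedAddCommGroup X₁] [NormedSpace ℝ X₁]
    -- (C1): common domain `X₁` compactly embedded in `X`, each `A_ε` self-adjoint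
    (ι : X₁ →L[ℝ] X) (hι_inj : Function.Injective ι) (hι_cpt : IsCompactOperator ι)
    (A : ℝ → X₁ →L[ℝ] X)
    (hsa : ∀ ε : ℝ, 0 ≤ ε → ∀ ψ φ : X₁, ⟪A ε ψ, ι φ⟫ = ⟪ι ψ, A ε φ⟫)
    -- (C2): `A₀` strictly positive and `m₀⟨A₀ψ,ψ⟩ ≤ ⟨A_εψ,ψ⟩ ≤ m₁⟨A₀ψ,ψ⟩`
    (m₀ m₁ : ℝ) (hm₀ : 0 < m₀) (hm₁ : 0 < m₁)
    (hpos : ∀ ψ : X₁, ψ ≠ 0 → 0 < ⟪A 0 ψ, ι ψ⟫)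
    (hcomp : ∀ ε : ℝ, 0 ≤ ε → ∀ ψ : X₁,
      m₀ * ⟪A 0 ψ, ι ψ⟫ ≤ ⟪A ε ψ, ι ψ⟫ ∧ ⟪A ε ψ, ι ψ⟫ ≤ m₁ * ⟪A 0 ψ, ι ψ⟫)
    -- (C3): strong convergence of the resolvents `A_ε⁻¹ψ → A₀⁻¹ψ`
    (Ainv : ℝ → X →L[ℝ] X₁)
    (hAinv : ∀ ε : ℝ, 0 ≤ ε → (∀ x : X, A ε (Ainv ε x) = x) ∧ ∀ ψ : X₁, Ainv ε (A ε ψ) = ψ)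
    (hres : ∀ x : X, Tendsto (fun ε => ι (Ainv ε x)) (nhdsWithin 0 (Set.Ioi 0))
      (nhds (ι (Ainv 0 x))))
    -- `T^ε` is the contraction semigroup generated by `-A_ε`
    (T : ℝ → ℝ → X →L[ℝ] X)
    (hT0 : ∀ ε : ℝ, 0 ≤ ε → T ε 0 = 1)
    (hTadd : ∀ ε : ℝ, 0 ≤ ε → ∀ s t : ℝ, 0 ≤ s → 0 ≤ t → T ε (s + t) = (T ε s).comp (T ε t))
    (hTcont : ∀ ε : ℝ, 0 ≤ ε → ∀ x : X, Continuous fun t => T ε t x)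
    (hTcontr : ∀ ε : ℝ, 0 ≤ ε → ∀ t : ℝ, 0 ≤ t → ‖T ε t‖ ≤ 1)
    (hgen : ∀ ε : ℝ, 0 ≤ ε → ∀ ψ : X₁, ∀ t : ℝ, 0 ≤ t →
      HasDerivAt (fun s => T ε s (ι ψ)) (-(T ε t (A ε ψ))) t)
    -- `ψ_ε → ψ_0` strongly in `X`
    (ψ : ℝ → X) (hψ : Tendsto ψ (nhdsWithin 0 (Set.Ioi 0)) (nhds (ψ 0))) :
    ∀ τ : ℝ, 0 < τ → TendstoUniformlyOn (fun ε t => T ε t (ψ ε)) (fun t => T 0 t (ψ 0))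
      (nhdsWithin 0 (Set.Ioi 0)) (Set.Icc 0 τ) :=
  stmt2_general ι A hsa m₀ m₁ hm₀ hpos hcomp Ainv hAinv hres T hT0 hTadd hTcont hTcontr hgen ψ hψ
end

section
/- (Maximum principle for the time optimal control problem.) If (τ*, u*) solves (TP)^M with ψ ∉ B(0,r), then there exists η ∈ X, η ≠ 0, such that for almost every t ∈ (0,τ*), ⟨u*(t), B*T*_{τ*-t}η⟩_U = max{⟨v, B*T*_{τ*-t}η⟩_U : v ∈ U, ||v||_U ≤ M}, and moreover η = -z(τ*;ψ,u*). -/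
open MeasureTheory Filter
open scoped RealInnerProductSpace

/-- The state trajectory `z(t;ψ,u) = T_t ψ + ∫_0^t T_{t-σ} B u(σ) dσ`. -/
noncomputable def traj {X U : Type*} [NormedAddCommGroup X] [NormedSpace ℝ X] [CompleteSpace X]
    [NormedAddCommGroup U] [NormedSpace ℝ U]
    (T : ℝ → X →L[ℝ] X) (B : U →L[ℝ] X) (ψ : X) (u : ℝ → U) (t : ℝ) : X :=
  T t ψ + ∫ σ in Set.Ioc 0 t, T (t - σ) (B (u σ))

/-- `u` belongs to the closed ball of radius `M` in `L^∞((0,∞);U)`. -/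
def admissible {U : Type*} [NormedAddCommGroup U] (M : ℝ) (u : ℝ → U) : Prop :=
  AEStronglyMeasurable u (volume.restrict (Set.Ioi 0)) ∧
    ∀ᵐ t ∂volume.restrict (Set.Ioi 0), ‖u t‖ ≤ M

/-!
Since the trajectory is affine in the control, the reachable set at time `τ*` is convex. By
optimality and the intermediate value theorem no admissible trajectory enters the open ball
`B(0,r)` at time `τ*`, while `z(τ*;ψ,u*)` lies in the closed ball; so `z = z(τ*;ψ,u*)` is a point
of minimal norm of the reachable set, and `⟪y - z, z⟫ ≥ 0` for every reachable `y`. Testing this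
with needle variations of `u*` (a constant `v` on a small ball around `t`) and letting the ball
shrink to a Lebesgue point `t` gives `⟪v, B* T*_{τ*-t} η⟫ ≤ ⟪u*(t), B* T*_{τ*-t} η⟫` for
`η = -z`; the exceptional null set does not depend on `v` because the left side is continuous
in `t`.
-/

open Set Metric Topology

section StronglyContinuous

variable {α 𝕜 E F : Type*} [TopologicalSpace α] [NontriviallyNormedField 𝕜]
  [NormedAddCommGroup E] [NormedSpace 𝕜 E] [CompleteSpace E]
  [NormedAddCommGroup F] [NormedSpace 𝕜 F] {T : α → E →L[𝕜] F}

theorem exists_forall_opNorm_le_of_isCompact (hT : ∀ x, Continuous fun t => T t x)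
    {K : Set α} (hK : IsCompact K) : ∃ C, ∀ s ∈ K, ‖T s‖ ≤ C := by
  obtain ⟨C, hC⟩ := banach_steinhaus (g := fun s : K => T s) fun x => by
    obtain ⟨C, hC⟩ := hK.exists_bound_of_continuousOn (hT x).continuousOn
    exact ⟨C, fun s => hC s s.2⟩
  exact ⟨C, fun s hs => hC ⟨s, hs⟩⟩

theorem continuous_uncurry_of_strongly_continuous [WeaklyLocallyCompactSpace α]
    (hT : ∀ x, Continuous fun t => T t x) : Continuous fun p : α × E => T p.1 p.2 := by
  refine continuous_iff_continuousAt.2 fun ⟨s₀, x₀⟩ => ?_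
  obtain ⟨K, hK, hKs₀⟩ := exists_compact_mem_nhds s₀
  obtain ⟨C, hC⟩ := exists_forall_opNorm_le_of_isCompact hT hK
  -- `T s x = T s (x - x₀) + T s x₀`, and the first term is at most `C ‖x - x₀‖` near `s₀`.
  have hsmall : Tendsto (fun p : α × E => T p.1 (p.2 - x₀)) (𝓝 (s₀, x₀)) (𝓝 0) := by
    have hbound : Tendsto (fun p : α × E => C * ‖p.2 - x₀‖) (𝓝 (s₀, x₀)) (𝓝 0) :=
      (continuous_const.mul (continuous_snd.sub continuous_const).norm).tendsto' _ _ (by simp)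
    refine squeeze_zero_norm' ?_ hbound
    filter_upwards [continuous_fst.continuousAt.preimage_mem_nhds hKs₀] with p hp
    exact (T p.1).le_of_opNorm_le (hC _ hp) _
  have hx₀ : Tendsto (fun p : α × E => T p.1 x₀) (𝓝 (s₀, x₀)) (𝓝 (T s₀ x₀)) :=
    ((hT x₀).tendsto s₀).comp continuous_fst.continuousAt
  simpa [ContinuousAt] using hsmall.add hx₀

end StronglyContinuous

theorem continuousOn_setIntegral_Ioc_zero {E : Type*} [NormedAddCommGroup E] [NormedSpace ℝ E]
    {F : ℝ → ℝ → E} {a C : ℝ}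
    (hF_meas : ∀ t, AEStronglyMeasurable (F t) (volume.restrict (Ioc 0 a)))
    (h_bound : ∀ t ∈ Icc 0 a, ∀ᵐ σ ∂volume.restrict (Ioc 0 a), ‖F t σ‖ ≤ C)
    (h_cont : ∀ σ, Continuous fun t => F t σ) :
    ContinuousOn (fun t => ∫ σ in Ioc 0 t, F t σ) (Icc 0 a) := by
  have hind : EqOn (fun t => ∫ σ in Ioc 0 a, (Ioc 0 t).indicator (F t) σ)
      (fun t => ∫ σ in Ioc 0 t, F t σ) (Icc 0 a) := fun t ht => by
    simp only [setIntegral_indicator measurableSet_Ioc, Ioc_inter_Ioc, max_self,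
      min_eq_right ht.2]
  refine ContinuousOn.congr (fun t₀ _ => ?_) hind.symm
  refine continuousWithinAt_of_dominated (bound := fun _ => C)
    (Eventually.of_forall fun t => (hF_meas t).indicator measurableSet_Ioc)
    (eventually_nhdsWithin_of_forall fun t ht => (h_bound t ht).mono fun σ hσ =>
      (norm_indicator_le_norm_self _ _).trans hσ)
    (integrable_const C) ?_
  -- The cut-off `σ ≤ t` only jumps at `t = σ`, a null set of `σ`.
  filter_upwards [ae_restrict_of_ae (Measure.ae_ne volume t₀), ae_restrict_mem measurableSet_Ioc]
    with σ hσt₀ hσ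
  refine ContinuousAt.continuousWithinAt ?_
  rcases hσt₀.lt_or_gt with hlt | hgt
  · refine (h_cont σ).continuousAt.congr ?_
    filter_upwards [eventually_gt_nhds hlt] with t ht
    exact (indicator_of_mem (mem_Ioc.2 ⟨hσ.1, ht.le⟩) _).symm
  · refine (continuousAt_const (y := (0 : E))).congr ?_
    filter_upwards [eventually_lt_nhds hgt] with t ht
    exact (indicator_of_notMem (fun h => ht.not_ge h.2) _).symm

theorem Continuous.tendsto_setAverage_closedBall {E : Type*} [NormedAddCommGroup E]
    [NormedSpace ℝ E] [CompleteSpace E] {p : ℝ → E} (hp : Continuous p) (t : ℝ) :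
    Tendsto (fun δ => ⨍ σ in closedBall t δ, p σ) (𝓝[>] 0) (𝓝 (p t)) := by
  refine Metric.tendsto_nhds.2 fun ε hε => ?_
  obtain ⟨δ₀, hδ₀, hp'⟩ := Metric.continuous_iff.1 hp t (ε / 2) (half_pos hε)
  filter_upwards [Ioo_mem_nhdsGT hδ₀] with δ hδ
  have hmem : ⨍ σ in closedBall t δ, p σ ∈ closedBall (p t) (ε / 2) := by
    refine (convex_closedBall _ _).set_average_mem isClosed_closedBall
      (measure_closedBall_pos volume t hδ.1).ne' measure_closedBall_lt_top.ne ?_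
      (hp.continuousOn.integrableOn_compact (isCompact_closedBall t δ))
    filter_upwards [ae_restrict_mem measurableSet_closedBall] with σ hσ
    exact (hp' σ (hσ.trans_lt hδ.2)).le
  exact (mem_closedBall.1 hmem).trans_lt (half_lt_self hε)

theorem ae_forall_le_of_forall_setIntegral_le {q : ℝ → ℝ} {s : Set ℝ} (hs : IsOpen s)
    (hq : IntegrableOn q s) :
    ∀ᵐ t ∂volume.restrict s, ∀ p : ℝ → ℝ, Continuous p →
      (∀ E ⊆ s, MeasurableSet E → ∫ σ in E, p σ ≤ ∫ σ in E, q σ) → p t ≤ q t := by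
  have hleb := IsUnifLocDoublingMeasure.ae_tendsto_average (μ := volume)
    (hq.integrable_indicator hs.measurableSet).locallyIntegrable 1
  filter_upwards [ae_restrict_of_ae hleb, ae_restrict_mem hs.measurableSet]
    with t hleb ht p hp hle
  have hq_lim : Tendsto (fun δ => ⨍ σ in closedBall t δ, s.indicator q σ) (𝓝[>] 0)
      (𝓝 (q t)) := by
    rw [← indicator_of_mem ht q]
    refine hleb (fun _ => t) id tendsto_id ?_
    filter_upwards [self_mem_nhdsWithin] with δ hδ
    simpa using le_of_lt hδ
  obtain ⟨ε, hε, hball⟩ := Metric.isOpen_iff.1 hs t ht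
  refine le_of_tendsto_of_tendsto (hp.tendsto_setAverage_closedBall t) hq_lim ?_
  filter_upwards [Ioo_mem_nhdsGT hε] with δ hδ
  have hsub : closedBall t δ ⊆ s := (closedBall_subset_ball hδ.2).trans hball
  rw [setAverage_eq, setAverage_eq, setIntegral_indicator hs.measurableSet,
    inter_eq_left.2 hsub]
  exact smul_le_smul_of_nonneg_left (hle _ hsub measurableSet_closedBall) (by positivity)

theorem setIntegral_le_of_integral_piecewise_le {α : Type*} [MeasurableSpace α] {μ : Measure α}
    {f g : α → ℝ} {s : Set α} [DecidablePred (· ∈ s)] (hs : MeasurableSet s)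
    (hf : IntegrableOn f s μ) (hg : Integrable g μ)
    (h : ∫ x, s.piecewise f g x ∂μ ≤ ∫ x, g x ∂μ) :
    ∫ x in s, f x ∂μ ≤ ∫ x in s, g x ∂μ := by
  rw [integral_piecewise hs hf hg.integrableOn, ← integral_add_compl hs hg] at h
  linarith

theorem admissible.piecewise {U : Type*} [NormedAddCommGroup U] {M : ℝ} {u : ℝ → U}
    (hu : admissible M u) {w : U} (hw : ‖w‖ ≤ M) {E : Set ℝ}
    [DecidablePred (· ∈ E)] (hE : MeasurableSet E) :
    admissible M (E.piecewise (fun _ => w) u) := by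
  refine ⟨aestronglyMeasurable_const.piecewise hE hu.1.restrict, ?_⟩
  filter_upwards [hu.2] with σ hσ
  by_cases h : σ ∈ E <;> simp [h, hw, hσ]

theorem real_inner_sub_nonneg_of_isMinOn_norm {F : Type*} [NormedAddCommGroup F]
    [InnerProductSpace ℝ F] {K : Set F} (hK : Convex ℝ K) {z : F} (hz : z ∈ K)
    (hmin : IsMinOn norm K z) {w : F} (hw : w ∈ K) : 0 ≤ ⟪z, w - z⟫ := by
  have : Nonempty K := ⟨⟨z, hz⟩⟩
  have hproj : ‖0 - z‖ = ⨅ w : K, ‖0 - (w : F)‖ := by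
    simp only [zero_sub, norm_neg]
    have hbdd : BddBelow (range fun w : K => ‖(w : F)‖) :=
      ⟨0, forall_mem_range.2 fun _ => norm_nonneg _⟩
    exact le_antisymm (le_ciInf fun w => hmin w.2) (ciInf_le hbdd ⟨z, hz⟩)
  have := (norm_eq_iInf_iff_real_inner_le_zero hK hz).1 hproj w hw
  rw [zero_sub, inner_neg_left] at this
  linarith

section Trajectory

variable {X U : Type*} [NormedAddCommGroup X] [NormedSpace ℝ X] [CompleteSpace X]
  [NormedAddCommGroup U] [NormedSpace ℝ U] {T : ℝ → X →L[ℝ] X} {M : ℝ} {u v : ℝ → U}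

def reachableSet (T : ℝ → X →L[ℝ] X) (B : U →L[ℝ] X) (ψ : X) (M τ : ℝ) : Set X :=
  (fun u => traj T B ψ u τ) '' {u | admissible M u}

theorem admissible.exists_bound (hT : ∀ x, Continuous fun t => T t x) (B : U →L[ℝ] X)
    (hu : admissible M u) (a : ℝ) :
    ∃ C, ∀ᵐ σ ∂volume.restrict (Ioi 0), ∀ s ∈ Icc (-a) a, ‖T s (B (u σ))‖ ≤ C := by
  obtain ⟨C, hC⟩ := exists_forall_opNorm_le_of_isCompact hT isCompact_Icc
  refine ⟨C * (‖B‖ * M), hu.2.mono fun σ hσ s hs => ?_⟩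
  exact (T s).le_opNorm_of_le (B.le_opNorm_of_le hσ) |>.trans <|
    mul_le_mul_of_nonneg_right (hC s hs) ((norm_nonneg _).trans (B.le_opNorm_of_le hσ))

theorem aestronglyMeasurable_traj_integrand (hT : ∀ x, Continuous fun t => T t x)
    (B : U →L[ℝ] X) {μ : Measure ℝ} (hu : AEStronglyMeasurable u μ) (t : ℝ) :
    AEStronglyMeasurable (fun σ => T (t - σ) (B (u σ))) μ :=
  (continuous_uncurry_of_strongly_continuous hT).comp_aestronglyMeasurable
    ((continuous_sub_left t).aestronglyMeasurable.prodMk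
      (B.continuous.comp_aestronglyMeasurable hu))

theorem admissible.integrableOn_traj_integrand (hT : ∀ x, Continuous fun t => T t x)
    (B : U →L[ℝ] X) (hu : admissible M u) (t : ℝ) :
    IntegrableOn (fun σ => T (t - σ) (B (u σ))) (Ioc 0 t) := by
  obtain ⟨C, hC⟩ := hu.exists_bound hT B t
  refine Integrable.of_bound (aestronglyMeasurable_traj_integrand hT B
    (hu.1.mono_measure (Measure.restrict_mono Ioc_subset_Ioi_self le_rfl)) t) C ?_
  filter_upwards [ae_restrict_of_ae_restrict_of_subset Ioc_subset_Ioi_self hC,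
    ae_restrict_mem measurableSet_Ioc] with σ hσ hmem
  exact hσ _ ⟨by linarith [hmem.1, hmem.2], by linarith [hmem.1]⟩

theorem admissible.continuousOn_traj (hT : ∀ x, Continuous fun t => T t x) (B : U →L[ℝ] X)
    (ψ : X) (hu : admissible M u) (a : ℝ) : ContinuousOn (traj T B ψ u) (Icc 0 a) := by
  obtain ⟨C, hC⟩ := hu.exists_bound hT B a
  refine (hT ψ).continuousOn.add (continuousOn_setIntegral_Ioc_zero (C := C)
    (fun t => aestronglyMeasurable_traj_integrand hT B
      (hu.1.mono_measure (Measure.restrict_mono Ioc_subset_Ioi_self le_rfl)) t)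
    (fun t ht => ?_) (fun σ => (hT _).comp (continuous_sub_right σ)))
  filter_upwards [ae_restrict_of_ae_restrict_of_subset Ioc_subset_Ioi_self hC,
    ae_restrict_mem measurableSet_Ioc] with σ hσ hmem
  exact hσ _ ⟨by linarith [hmem.2, ht.1], by linarith [hmem.1, ht.2]⟩

theorem traj_zero (hT0 : T 0 = 1) (B : U →L[ℝ] X) (ψ : X) (u : ℝ → U) :
    traj T B ψ u 0 = ψ := by
  simp [traj, hT0]

theorem convex_setOf_admissible : Convex ℝ {u : ℝ → U | admissible M u} := by
  intro u hu v hv a b ha hb hab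
  refine ⟨(hu.1.const_smul a).add (hv.1.const_smul b), ?_⟩
  filter_upwards [hu.2, hv.2] with σ huσ hvσ
  simpa using convex_closedBall (0 : U) M (mem_closedBall_zero_iff.2 huσ)
    (mem_closedBall_zero_iff.2 hvσ) ha hb hab

theorem traj_smul_add_smul (hT : ∀ x, Continuous fun t => T t x) (B : U →L[ℝ] X) (ψ : X)
    (hu : admissible M u) (hv : admissible M v) {a b : ℝ} (hab : a + b = 1) (τ : ℝ) :
    traj T B ψ (a • u + b • v) τ = a • traj T B ψ u τ + b • traj T B ψ v τ := by
  obtain rfl : b = 1 - a := by linarith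
  simp only [traj, Pi.add_apply, Pi.smul_apply, map_add, map_smul]
  rw [integral_add, integral_smul, integral_smul]
  · module
  exacts [(hu.integrableOn_traj_integrand hT B τ).smul a,
    (hv.integrableOn_traj_integrand hT B τ).smul (1 - a)]

theorem convex_reachableSet (hT : ∀ x, Continuous fun t => T t x) (B : U →L[ℝ] X) (ψ : X)
    (τ : ℝ) : Convex ℝ (reachableSet T B ψ M τ) := by
  rintro _ ⟨u, hu, rfl⟩ _ ⟨v, hv, rfl⟩ a b ha hb hab
  exact ⟨a • u + b • v, convex_setOf_admissible hu hv ha hb hab,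
    traj_smul_add_smul hT B ψ hu hv hab τ⟩

theorem le_norm_traj_of_isOptimal (hT0 : T 0 = 1) (hT : ∀ x, Continuous fun t => T t x)
    (B : U →L[ℝ] X) {ψ : X} {r τ : ℝ} (hψ : ψ ∉ closedBall 0 r) (hτ : 0 ≤ τ)
    (hopt : ∀ t : ℝ, 0 ≤ t → ∀ u : ℝ → U, admissible M u →
      traj T B ψ u t ∈ closedBall 0 r → τ ≤ t)
    (hu : admissible M u) : r ≤ ‖traj T B ψ u τ‖ := by
  by_contra! hlt
  have hr : r ∈ Icc ‖traj T B ψ u τ‖ ‖traj T B ψ u 0‖ := by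
    rw [traj_zero hT0]
    exact ⟨hlt.le, (not_le.1 (mt mem_closedBall_zero_iff.2 hψ)).le⟩
  obtain ⟨t, ht, hrt⟩ := intermediate_value_Icc' hτ (hu.continuousOn_traj hT B ψ τ).norm hr
  obtain rfl : t = τ :=
    le_antisymm ht.2 (hopt t ht.1 u hu (mem_closedBall_zero_iff.2 hrt.le))
  exact hlt.ne hrt

end Trajectory

section MaximumPrinciple

variable {X U : Type*} [NormedAddCommGroup X] [InnerProductSpace ℝ X] [CompleteSpace X]
  [NormedAddCommGroup U] [NormedSpace ℝ U] {T : ℝ → X →L[ℝ] X} {M : ℝ} {u v : ℝ → U}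

theorem inner_traj_sub_traj (hT : ∀ x, Continuous fun t => T t x) (B : U →L[ℝ] X) (ψ : X)
    (hu : admissible M u) (hv : admissible M v) (τ : ℝ) (η : X) :
    ⟪traj T B ψ u τ - traj T B ψ v τ, η⟫ =
      (∫ σ in Ioc 0 τ, ⟪T (τ - σ) (B (u σ)), η⟫) - ∫ σ in Ioc 0 τ, ⟪T (τ - σ) (B (v σ)), η⟫ := by
  simp only [traj, add_sub_add_left_eq_sub, inner_sub_right, real_inner_comm η,
    integral_inner (hu.integrableOn_traj_integrand hT B τ),
    integral_inner (hv.integrableOn_traj_integrand hT B τ)]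

theorem setIntegral_inner_le_of_isMinOn_norm (hT : ∀ x, Continuous fun t => T t x)
    (B : U →L[ℝ] X) {ψ : X} {τ : ℝ} (hu : admissible M u)
    (hmin : IsMinOn norm (reachableSet T B ψ M τ) (traj T B ψ u τ)) {w : U} (hw : ‖w‖ ≤ M)
    {E : Set ℝ} (hE : MeasurableSet E) (hEτ : E ⊆ Ioc 0 τ) :
    ∫ σ in E, ⟪T (τ - σ) (B w), -traj T B ψ u τ⟫ ≤
      ∫ σ in E, ⟪T (τ - σ) (B (u σ)), -traj T B ψ u τ⟫ := by
  classical
  have hu' := hu.piecewise hw hE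
  have hvar := real_inner_sub_nonneg_of_isMinOn_norm (convex_reachableSet hT B ψ τ)
    ⟨u, hu, rfl⟩ hmin ⟨_, hu', rfl⟩
  rw [real_inner_comm, ← neg_nonpos, ← inner_neg_right,
    inner_traj_sub_traj hT B ψ hu' hu, sub_nonpos] at hvar
  beta_reduce at hvar
  set η := -traj T B ψ u τ
  have hpc : Continuous fun σ => ⟪T (τ - σ) (B w), η⟫ :=
    ((hT (B w)).comp (continuous_sub_left τ)).inner continuous_const
  have hpw : ∀ σ, E.piecewise (fun σ => ⟪T (τ - σ) (B w), η⟫)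
      (fun σ => ⟪T (τ - σ) (B (u σ)), η⟫) σ =
        ⟪T (τ - σ) (B (E.piecewise (fun _ => w) u σ)), η⟫ := fun σ => by
    by_cases h : σ ∈ E <;> simp [h]
  have := setIntegral_le_of_integral_piecewise_le (μ := volume.restrict (Ioc 0 τ)) hE
    (hpc.integrableOn_Icc.mono_set Ioc_subset_Icc_self).integrableOn
    ((hu.integrableOn_traj_integrand hT B τ).inner_const η) (by simpa only [hpw] using hvar)
  rwa [Measure.restrict_restrict_of_subset hEτ] at this

end MaximumPrinciple

theorem stmt6_general {X U : Type*} [NormedAddCommGroup X] [InnerProductSpace ℝ X] [CompleteSpace X]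
    [NormedAddCommGroup U] [InnerProductSpace ℝ U] [CompleteSpace U]
    (T : ℝ → X →L[ℝ] X) (B : U →L[ℝ] X)
    (hT0 : T 0 = 1)
    (hTcont : ∀ x : X, Continuous fun t => T t x)
    (r M : ℝ) (hr : 0 < r)
    (ψ : X) (hψ : ψ ∉ Metric.closedBall (0 : X) r)
    (τs : ℝ) (us : ℝ → U) (hτs : 0 ≤ τs)
    (hus_adm : admissible M us)
    (hus_target : traj T B ψ us τs ∈ Metric.closedBall (0 : X) r)
    (hopt : ∀ t : ℝ, 0 ≤ t → ∀ u : ℝ → U, admissible M u →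
      traj T B ψ u t ∈ Metric.closedBall (0 : X) r → τs ≤ t) :
    ∃ η : X, η ≠ 0 ∧ η = -traj T B ψ us τs ∧
      ∀ᵐ t ∂volume.restrict (Set.Ioo 0 τs),
        IsGreatest ((fun v : U => ⟪v, B.adjoint ((T (τs - t)).adjoint η)⟫) ''
            Metric.closedBall (0 : U) M)
          ⟪us t, B.adjoint ((T (τs - t)).adjoint η)⟫ := by
  have hr_le {u : ℝ → U} (hu : admissible M u) : r ≤ ‖traj T B ψ u τs‖ :=
    le_norm_traj_of_isOptimal hT0 hTcont B hψ hτs hopt hu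
  have hmin : IsMinOn norm (reachableSet T B ψ M τs) (traj T B ψ us τs) := by
    rintro _ ⟨u, hu, rfl⟩
    exact (mem_closedBall_zero_iff.1 hus_target).trans (hr_le hu)
  refine ⟨_, neg_ne_zero.2 (norm_pos_iff.1 (hr.trans_le (hr_le hus_adm))), rfl, ?_⟩
  have hbound : ∀ᵐ t ∂volume.restrict (Ioo 0 τs), ‖us t‖ ≤ M :=
    ae_restrict_of_ae_restrict_of_subset Ioo_subset_Ioi_self hus_adm.2
  filter_upwards [ae_forall_le_of_forall_setIntegral_le isOpen_Ioo
    (IntegrableOn.mono_set ((hus_adm.integrableOn_traj_integrand hTcont B τs).inner_const _)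
      Ioo_subset_Ioc_self), hbound] with t hle hut
  refine ⟨⟨us t, mem_closedBall_zero_iff.2 hut, rfl⟩, ?_⟩
  rintro _ ⟨w, hw, rfl⟩
  simp only [ContinuousLinearMap.adjoint_inner_right]
  exact hle _ (((hTcont (B w)).comp (continuous_sub_left τs)).inner continuous_const)
    fun E hE hEm => setIntegral_inner_le_of_isMinOn_norm hTcont B hus_adm hmin
      (mem_closedBall_zero_iff.1 hw) hEm (hE.trans Ioo_subset_Ioc_self)

/-- (Maximum principle for the time optimal control problem.)
If `(τ*, u*)` solves `(TP)^M` with `ψ ∉ B(0,r)`, then there exists `η ∈ X`, `η ≠ 0`, such that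
for a.e. `t ∈ (0,τ*)`, `⟨u*(t), B* T*_{τ*-t} η⟩ = max {⟨v, B* T*_{τ*-t} η⟩ : ‖v‖ ≤ M}`,
and moreover `η = -z(τ*;ψ,u*)`. -/
theorem stmt6 {X U : Type*} [NormedAddCommGroup X] [InnerProductSpace ℝ X] [CompleteSpace X]
    [NormedAddCommGroup U] [InnerProductSpace ℝ U] [CompleteSpace U]
    (T : ℝ → X →L[ℝ] X) (B : U →L[ℝ] X)
    (hT0 : T 0 = 1)
    (hTadd : ∀ s t : ℝ, 0 ≤ s → 0 ≤ t → T (s + t) = (T s).comp (T t))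
    (hTcont : ∀ x : X, Continuous fun t => T t x)
    (r M : ℝ) (hr : 0 < r) (hM : 0 < M)
    (ψ : X) (hψ : ψ ∉ Metric.closedBall (0 : X) r)
    (τs : ℝ) (us : ℝ → U) (hτs : 0 ≤ τs)
    (hus_adm : admissible M us)
    (hus_target : traj T B ψ us τs ∈ Metric.closedBall (0 : X) r)
    (hopt : ∀ t : ℝ, 0 ≤ t → ∀ u : ℝ → U, admissible M u →
      traj T B ψ u t ∈ Metric.closedBall (0 : X) r → τs ≤ t) :
    ∃ η : X, η ≠ 0 ∧ η = -traj T B ψ us τs ∧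
      ∀ᵐ t ∂volume.restrict (Set.Ioo 0 τs),
        IsGreatest ((fun v : U => ⟪v, B.adjoint ((T (τs - t)).adjoint η)⟫) ''
            Metric.closedBall (0 : U) M)
          ⟪us t, B.adjoint ((T (τs - t)).adjoint η)⟫ :=
  stmt6_general T B hT0 hTcont r M hr ψ hψ τs us hτs hus_adm hus_target hopt
end

section
/- If the pair (A*, B*) is approximately observable in any time, then for every τ > 0 the functional J^τ(η) = (1/2)(∫_0^τ ||B*T*_{τ-t}η||_U dt)² + ⟨ψ, T*_τη⟩ + r||η|| is continuous, strictly convex and coercive on X, and hence has a unique minimizer. -/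
open MeasureTheory Filter
open scoped RealInnerProductSpace ENNReal

/-!
Write `p η = ∫_0^τ ‖B* T*_{τ-t} η‖ dt`. This is a continuous seminorm, and approximate
observability says exactly that it is a norm: `t ↦ B* T*_t η` is weakly continuous, so it vanishes
on all of `[0, τ]` as soon as the integral of its norm does. Thus `J = ½ p² + ⟪T_τ ψ, ·⟫ + r ‖·‖`.
Strict convexity comes from `p²` along rays, where `p` separates points, and from the strictly
convex Hilbert norm off rays. Coercivity and the existence of a minimizer both rest on weak
compactness of bounded closed convex sets (Banach–Alaoglu through the Riesz isomorphism): on the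
unit sphere, small `p ζ` forces `⟪T_τ ψ, ζ⟫ > -r/2`, so `J` grows at least linearly along
directions where `p` is small and quadratically along the others.
-/

/-- The functional `J^τ(η) = ½(∫_0^τ ‖B*T*_{τ-t}η‖ dt)² + ⟨ψ, T*_τ η⟩ + r‖η‖`. -/
noncomputable def Jfun {X U : Type*} [NormedAddCommGroup X] [InnerProductSpace ℝ X]
    [CompleteSpace X] [NormedAddCommGroup U] [InnerProductSpace ℝ U] [CompleteSpace U]
    (T : ℝ → X →L[ℝ] X) (B : U →L[ℝ] X) (r : ℝ) (ψ : X) (τ : ℝ) (η : X) : ℝ :=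
  (1 / 2) * (∫ t in Set.Ioc 0 τ, ‖B.adjoint ((T (τ - t)).adjoint η)‖) ^ 2 +
    ⟪ψ, (T τ).adjoint η⟫ + r * ‖η‖

section Hilbert

open InnerProductSpace

variable {X : Type*} [NormedAddCommGroup X] [InnerProductSpace ℝ X]

namespace Seminorm

variable (p : Seminorm ℝ X)

theorem apply_ne_of_sameRay (hp : ∀ x, p x = 0 → x = 0) {x y : X} (hxy : SameRay ℝ x y)
    (hne : x ≠ y) : p x ≠ p y := by
  rcases eq_or_ne x 0 with rfl | hx
  · rw [map_zero]
    exact fun h => hne (hp y h.symm).symm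
  obtain ⟨c, hc, rfl⟩ := hxy.exists_nonneg_left hx
  have hpx : p x ≠ 0 := fun h => hx (hp x h)
  rw [map_smul_eq_mul, Real.norm_of_nonneg hc]
  intro h
  have hc1 : c = 1 := mul_right_cancel₀ hpx (by rw [one_mul]; exact h.symm)
  exact hne (by rw [hc1, one_smul])

theorem strictConvexOn_half_sq_add_inner_add_norm (hp : ∀ x, p x = 0 → x = 0) (φ : X) {r : ℝ}
    (hr : 0 < r) :
    StrictConvexOn ℝ Set.univ fun x => 1 / 2 * p x ^ 2 + ⟪φ, x⟫ + r * ‖x‖ := by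
  refine ⟨convex_univ, fun x _ y _ hxy a b ha hb hab => ?_⟩
  simp only [smul_eq_mul]
  have hp_le : p (a • x + b • y) ≤ a * p x + b * p y :=
    p.convexOn.2 trivial trivial ha.le hb.le hab
  have hsq : p (a • x + b • y) ^ 2 ≤ (a * p x + b * p y) ^ 2 :=
    pow_le_pow_left₀ (apply_nonneg _ _) hp_le 2
  have hnorm_le : ‖a • x + b • y‖ ≤ a * ‖x‖ + b * ‖y‖ :=
    (convexOn_norm convex_univ).2 trivial trivial ha.le hb.le hab
  have hinner : ⟪φ, a • x + b • y⟫ = a * ⟪φ, x⟫ + b * ⟪φ, y⟫ := by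
    rw [inner_add_right, real_inner_smul_right, real_inner_smul_right]
  have hsq_gap : a * p x ^ 2 + b * p y ^ 2 - (a * p x + b * p y) ^ 2 = a * b * (p x - p y) ^ 2 := by
    linear_combination (-(a * p x ^ 2 + b * p y ^ 2)) * hab
  -- On a ray `p` separates points, so the square is strictly convex there; off rays the norm is.
  by_cases hray : SameRay ℝ x y
  · have hgap : 0 < a * b * (p x - p y) ^ 2 := mul_pos (mul_pos ha hb)
      (pow_two_pos_of_ne_zero (sub_ne_zero.2 (p.apply_ne_of_sameRay hp hray hxy)))
    linarith [mul_le_mul_of_nonneg_left hnorm_le hr.le]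
  · have hray' : ¬SameRay ℝ (a • x) (b • y) := fun h => hray <| by
      simpa [smul_smul, ha.ne', hb.ne'] using
        (h.pos_smul_left (inv_pos.2 ha)).pos_smul_right (inv_pos.2 hb)
    have hnorm_lt : ‖a • x + b • y‖ < a * ‖x‖ + b * ‖y‖ := by
      simpa [norm_smul, abs_of_pos ha, abs_of_pos hb] using norm_add_lt_of_not_sameRay hray'
    have hgap : 0 ≤ a * b * (p x - p y) ^ 2 := by positivity
    linarith [mul_lt_mul_of_pos_left hnorm_lt hr]

end Seminorm

variable [CompleteSpace X]

theorem mem_of_forall_inner_le {C : Set X} (hC : Convex ℝ C) (hCc : IsClosed C) {x : X}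
    (h : ∀ v c, (∀ y ∈ C, ⟪y, v⟫ ≤ c) → ⟪x, v⟫ ≤ c) : x ∈ C := by
  by_contra hx
  obtain ⟨L, c, hLC, hLx⟩ := geometric_hahn_banach_closed_point hC hCc hx
  have hL : ∀ y, ⟪y, (toDual ℝ X).symm L⟫ = L y := fun y => by
    rw [real_inner_comm, toDual_symm_apply]
  exact hLx.not_ge <| hL x ▸ h _ c fun y hy => (hL y).symm ▸ (hLC y hy).le

theorem nonempty_iInter_of_antitone_of_convex_of_isClosed {C : ℕ → Set X} (hC : Antitone C)
    (hconv : ∀ n, Convex ℝ (C n)) (hclosed : ∀ n, IsClosed (C n)) (hne : ∀ n, (C n).Nonempty)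
    (hb : Bornology.IsBounded (C 0)) : (⋂ n, C n).Nonempty := by
  obtain ⟨R, hR⟩ := hb.subset_closedBall 0
  set K : Set (WeakDual ℝ X) := WeakDual.toStrongDual ⁻¹' Metric.closedBall 0 R
  set S : ℕ → Set (WeakDual ℝ X) := fun n =>
    {f | ∀ v c, (∀ y ∈ C n, ⟪y, v⟫ ≤ c) → f v ≤ c}
  have hS : ∀ n, IsClosed (S n) := fun n => by
    simp only [S, Set.ofPred_forall]
    exact isClosed_iInter fun v => isClosed_iInter fun c => isClosed_iInter fun _ =>
      isClosed_le (WeakDual.eval_continuous v) continuous_const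
  have hK : IsClosed K := WeakDual.isClosed_closedBall 0 R
  obtain ⟨f, hf⟩ := IsCompact.nonempty_iInter_of_sequence_nonempty_isCompact_isClosed
    (fun n => K ∩ S n)
    (fun n f hf => ⟨hf.1, fun v c hvc => hf.2 v c fun y hy => hvc y (hC n.le_succ hy)⟩)
    (fun n => by
      obtain ⟨x, hx⟩ := hne n
      refine ⟨toDual ℝ X x, ?_, fun v c hvc => hvc x hx⟩
      exact mem_closedBall_zero_iff.2 <| ((toDual ℝ X).norm_map x).trans_le
        (mem_closedBall_zero_iff.1 (hR (hC n.zero_le hx))))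
    ((WeakDual.isCompact_closedBall 0 R).inter_right (hS 0)) (fun n => hK.inter (hS n))
  refine ⟨(toDual ℝ X).symm (WeakDual.toStrongDual f), Set.mem_iInter.2 fun n => ?_⟩
  refine mem_of_forall_inner_le (hconv n) (hclosed n) fun v c hvc => ?_
  rw [toDual_symm_apply]
  exact (Set.mem_iInter.1 hf n).2 v c hvc

theorem LowerSemicontinuous.exists_forall_le_of_convexOn {f : X → ℝ} (hf : LowerSemicontinuous f)
    (hconv : ConvexOn ℝ Set.univ f) (hcoer : Tendsto f (Bornology.cobounded X) atTop) :
    ∃ x, ∀ y, f x ≤ f y := by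
  have hsub : ∀ c, Bornology.IsBounded {x | f x ≤ c} := fun c => by
    rw [Bornology.isBounded_def, Set.compl_ofPred]
    simp only [not_le]
    exact hcoer.eventually (eventually_gt_atTop c)
  have hlevels : ∀ c : ℕ → ℝ, Antitone c → (∀ n, ∃ x, f x ≤ c n) → ∃ x, ∀ n, f x ≤ c n :=
    fun c hc hne => by
      obtain ⟨x, hx⟩ := nonempty_iInter_of_antitone_of_convex_of_isClosed
        (C := fun n => {x | f x ≤ c n}) (fun m n hmn x hx => hx.trans (hc hmn))
        (fun n => by simpa using hconv.convex_le (c n)) (fun n => hf.isClosed_preimage (c n))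
        hne (hsub (c 0))
      exact ⟨x, Set.mem_iInter.1 hx⟩
  have hbdd : BddBelow (Set.range f) := by
    by_contra h
    obtain ⟨x, hx⟩ := hlevels (fun n => -n) (fun m n hmn => by simpa using hmn) fun n => by
      obtain ⟨_, ⟨y, rfl⟩, hy⟩ := not_bddBelow_iff.1 h (-n)
      exact ⟨y, hy.le⟩
    obtain ⟨n, hn⟩ := exists_nat_gt (-f x)
    linarith [hx n]
  obtain ⟨x, hx⟩ := hlevels (fun n => (⨅ y, f y) + 1 / (n + 1))
    (fun m n hmn => add_le_add_right (Nat.one_div_le_one_div hmn) _) fun n =>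
      let ⟨y, hy⟩ := exists_lt_of_ciInf_lt (lt_add_of_pos_right (⨅ y, f y)
        (Nat.one_div_pos_of_nat (n := n)))
      ⟨y, hy.le⟩
  refine ⟨x, fun y => le_trans ?_ (ciInf_le hbdd y)⟩
  simpa using ge_of_tendsto' (tendsto_one_div_add_atTop_nhds_zero_nat.const_add _) hx

namespace Seminorm

variable (p : Seminorm ℝ X)

theorem exists_pos_forall_inner_lt (hpc : LowerSemicontinuous p) (hp : ∀ x, p x = 0 → x = 0)
    (φ : X) {ε : ℝ} (hε : 0 < ε) : ∃ δ > 0, ∀ x, ‖x‖ ≤ 1 → p x ≤ δ → ⟪φ, x⟫ < ε := by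
  by_contra! h
  obtain ⟨x, hx⟩ := nonempty_iInter_of_antitone_of_convex_of_isClosed
    (C := fun n : ℕ => Metric.closedBall 0 1 ∩ {x | p x ≤ 1 / (n + 1)} ∩ {x | ε ≤ ⟪φ, x⟫})
    (fun m n hmn x hx => ⟨⟨hx.1.1,
      le_trans (b := 1 / ((n : ℝ) + 1)) hx.1.2 (Nat.one_div_le_one_div hmn)⟩, hx.2⟩)
    (fun n => ((_root_.convex_closedBall 0 1).inter (by simpa using p.convexOn.convex_le _)).inter
      (convex_halfSpace_ge (innerₛₗ ℝ φ).isLinear ε))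
    (fun n => (Metric.isClosed_closedBall.inter (hpc.isClosed_preimage _)).inter
      (isClosed_le continuous_const (continuous_const.inner continuous_id)))
    (fun n => let ⟨x, hx1, hxp, hxφ⟩ := h _ Nat.one_div_pos_of_nat
      ⟨x, ⟨mem_closedBall_zero_iff.2 hx1, hxp⟩, hxφ⟩)
    (Metric.isBounded_closedBall.subset fun x hx => hx.1.1)
  have hx' := Set.mem_iInter.1 hx
  have hpx : p x ≤ 0 :=
    ge_of_tendsto' tendsto_one_div_add_atTop_nhds_zero_nat fun n => (hx' n).1.2
  have hφx : ε ≤ ⟪φ, x⟫ := (hx' 0).2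
  rw [hp x (hpx.antisymm (apply_nonneg p x)), inner_zero_right] at hφx
  linarith

theorem tendsto_half_sq_add_inner_add_norm_cobounded (hpc : LowerSemicontinuous p)
    (hp : ∀ x, p x = 0 → x = 0) (φ : X) {r : ℝ} (hr : 0 < r) :
    Tendsto (fun x => 1 / 2 * p x ^ 2 + ⟪φ, x⟫ + r * ‖x‖) (Bornology.cobounded X) atTop := by
  obtain ⟨δ, hδ, hsmall⟩ := p.exists_pos_forall_inner_lt hpc hp (-φ) (half_pos hr)
  refine tendsto_atTop_mono (fun x => ?_) <| tendsto_inf_atTop _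
    (tendsto_norm_cobounded_atTop.const_mul_atTop (half_pos hr))
    (tendsto_norm_cobounded_atTop.atTop_mul_atTop₀ <| tendsto_atTop_add_const_right _ (-‖φ‖)
      (tendsto_norm_cobounded_atTop.const_mul_atTop (by positivity : 0 < δ ^ 2 / 2)))
  rcases eq_or_ne x 0 with rfl | hx
  · simp
  have hnx : 0 < ‖x‖ := norm_pos_iff.2 hx
  set ζ := ‖x‖⁻¹ • x
  have hxζ : x = ‖x‖ • ζ := by rw [smul_smul, mul_inv_cancel₀ hnx.ne', one_smul]
  have hpx : p x = ‖x‖ * p ζ := by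
    conv_lhs => rw [hxζ]
    rw [map_smul_eq_mul, norm_norm]
  have hφx : ⟪φ, x⟫ = ‖x‖ * ⟪φ, ζ⟫ := by
    conv_lhs => rw [hxζ]
    rw [real_inner_smul_right]
  rcases le_or_gt (p ζ) δ with hle | hlt
  · have hφζ : -(r / 2) < ⟪φ, ζ⟫ := by
      have := hsmall ζ (norm_smul_inv_norm hx).le hle
      rw [inner_neg_left] at this
      linarith
    have := mul_le_mul_of_nonneg_left hφζ.le hnx.le
    refine inf_le_left.trans ?_
    nlinarith [sq_nonneg (p x)]
  · have hpx' : (δ * ‖x‖) ^ 2 ≤ p x ^ 2 :=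
      pow_le_pow_left₀ (by positivity) (by rw [hpx, mul_comm]; gcongr) 2
    have := neg_le_of_abs_le (abs_real_inner_le_norm φ x)
    refine inf_le_right.trans ?_
    nlinarith

end Seminorm

end Hilbert

section IntegralNorm

variable {α X U : Type*} [NormedAddCommGroup X] [NormedSpace ℝ X]
  [NormedAddCommGroup U] [NormedSpace ℝ U]

theorem IsCompact.exists_opNorm_le_of_continuous_apply [TopologicalSpace α] [CompleteSpace X]
    {S : α → X →L[ℝ] U} (hS : ∀ x, Continuous fun t => S t x) {K : Set α} (hK : IsCompact K) :
    ∃ M, ∀ t ∈ K, ‖S t‖ ≤ M := by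
  obtain ⟨M, hM⟩ := banach_steinhaus (g := fun t : K => S t) fun x =>
    let ⟨C, hC⟩ := hK.exists_bound_of_continuousOn (hS x).continuousOn
    ⟨C, fun t => hC t t.2⟩
  exact ⟨M, fun t ht => hM ⟨t, ht⟩⟩

variable [MeasurableSpace α]

-- Without integrability the Bochner integral is junk `0` and the triangle inequality fails.
noncomputable def integralNormSeminorm (S : α → X →L[ℝ] U) (s : Set α) (μ : Measure α)
    (hS : ∀ x, IntegrableOn (fun t => ‖S t x‖) s μ) : Seminorm ℝ X :=
  Seminorm.of (fun x => ∫ t in s, ‖S t x‖ ∂μ)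
    (fun x y => calc
      ∫ t in s, ‖S t (x + y)‖ ∂μ ≤ ∫ t in s, (‖S t x‖ + ‖S t y‖) ∂μ :=
        integral_mono (hS (x + y)) ((hS x).add (hS y)) fun t => by
          simpa only [map_add] using norm_add_le _ _
      _ = _ := integral_add (hS x) (hS y))
    (fun c x => by simpa only [map_smul, norm_smul] using integral_const_mul ‖c‖ _)

variable {S : α → X →L[ℝ] U} {s : Set α} {μ : Measure α}
  (hS : ∀ x, IntegrableOn (fun t => ‖S t x‖) s μ)

theorem continuous_integralNormSeminorm (hs : μ s < ∞) {M : ℝ} (hM : ∀ t ∈ s, ‖S t‖ ≤ M) :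
    Continuous (integralNormSeminorm S s μ hS) := by
  set p := integralNormSeminorm S s μ hS
  have hbound : ∀ x, p x ≤ M * μ.real s * ‖x‖ := fun x => by
    refine (le_abs_self _).trans ?_
    rw [mul_right_comm]
    have := norm_setIntegral_le_of_norm_le_const (f := fun t => ‖S t x‖) hs fun t ht => by
      rw [norm_norm]
      exact (S t).le_of_opNorm_le (hM t ht) x
    rwa [Real.norm_eq_abs] at this
  refine (LipschitzWith.of_dist_le_mul (K := (M * μ.real s).toNNReal) fun x y => ?_).continuous
  rw [Real.dist_eq, dist_eq_norm]
  exact (abs_sub_map_le_sub p x y).trans <| (hbound _).trans <|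
    mul_le_mul_of_nonneg_right (Real.le_coe_toNNReal _) (norm_nonneg _)

end IntegralNorm

section Observation

variable {X U : Type*} [NormedAddCommGroup X] [InnerProductSpace ℝ X]
  [NormedAddCommGroup U] [InnerProductSpace ℝ U]

theorem lowerSemicontinuous_norm_of_continuous_inner {α : Type*} [TopologicalSpace α]
    {f : α → U} (hf : ∀ u, Continuous fun t => ⟪f t, u⟫) :
    LowerSemicontinuous fun t => ‖f t‖ := by
  intro t₀ y hy
  -- `u` norms `f t₀` (also when `f t₀ = 0`)
  set u := ‖f t₀‖⁻¹ • f t₀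
  have hu : ‖u‖ ≤ 1 := by
    rw [norm_smul, norm_inv, norm_norm]
    exact inv_mul_le_one_of_le₀ le_rfl (norm_nonneg _)
  have hfu : ⟪f t₀, u⟫ = ‖f t₀‖ := by
    rw [real_inner_smul_right, real_inner_self_eq_norm_sq, sq, ← mul_assoc, inv_mul_mul_self]
  filter_upwards [((hf u).tendsto t₀).eventually_const_lt (hfu.symm ▸ hy : y < ⟪f t₀, u⟫)]
    with t ht
  exact ht.trans_le ((real_inner_le_norm _ _).trans (mul_le_of_le_one_right (norm_nonneg _) hu))

theorem integrableOn_norm_of_continuous_inner {α : Type*} [TopologicalSpace α]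
    [MeasurableSpace α] [OpensMeasurableSpace α] {f : α → U}
    (hf : ∀ u, Continuous fun t => ⟪f t, u⟫) {s : Set α} {μ : Measure α} (hs : μ s < ∞)
    (hsm : MeasurableSet s) {C : ℝ} (hC : ∀ t ∈ s, ‖f t‖ ≤ C) :
    IntegrableOn (fun t => ‖f t‖) s μ :=
  IntegrableOn.of_bound hs
    (lowerSemicontinuous_norm_of_continuous_inner hf).measurable.aestronglyMeasurable C
    (ae_restrict_of_forall_mem hsm fun t ht => (norm_norm (f t)).trans_le (hC t ht))

theorem eqOn_zero_of_integral_norm_eq_zero {f : ℝ → U} (hf : ∀ u, Continuous fun t => ⟪f t, u⟫)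
    {a b : ℝ} (hab : a < b) (hint : IntegrableOn (fun t => ‖f t‖) (Set.Ioc a b))
    (h : ∫ t in Set.Ioc a b, ‖f t‖ = 0) : Set.EqOn f 0 (Set.Icc a b) := by
  have hae : ∀ᵐ t ∂volume.restrict (Set.Icc a b), f t = 0 := by
    rw [← Measure.restrict_congr_set Ioc_ae_eq_Icc]
    filter_upwards [(integral_eq_zero_iff_of_nonneg (fun t => norm_nonneg _) hint).1 h] with t ht
    simpa using ht
  intro t ht
  refine ext_inner_right ℝ fun u => ?_
  simpa using Measure.eqOn_Icc_of_ae_eq volume hab.ne (f := fun t => ⟪f t, u⟫) (g := 0)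
    (by filter_upwards [hae] with t ht; simp [ht]) (hf u).continuousOn continuousOn_const ht

variable [CompleteSpace X] [CompleteSpace U]

theorem exists_seminorm_eq_integral_norm_adjoint (T : ℝ → X →L[ℝ] X) (B : U →L[ℝ] X)
    (hT : ∀ x, Continuous fun t => T t x) {τ : ℝ} (hτ : 0 < τ) :
    ∃ p : Seminorm ℝ X, Continuous p ∧
      (∀ x, p x = ∫ t in Set.Ioc 0 τ, ‖B.adjoint ((T (τ - t)).adjoint x)‖) ∧
      ∀ x, p x = 0 → ∀ t ∈ Set.Icc 0 τ, B.adjoint ((T t).adjoint x) = 0 := by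
  obtain ⟨M, hM⟩ := isCompact_Icc.exists_opNorm_le_of_continuous_apply hT (K := Set.Icc 0 τ)
  set S : ℝ → X →L[ℝ] U := fun t => B.adjoint ∘L (T (τ - t)).adjoint
  have hSw : ∀ x u, Continuous fun t => ⟪S t x, u⟫ := fun x u => by
    simp only [S, ContinuousLinearMap.comp_apply, ContinuousLinearMap.adjoint_inner_left]
    exact continuous_const.inner ((hT (B u)).comp (continuous_const.sub continuous_id))
  have hSM : ∀ t ∈ Set.Ioc 0 τ, ‖S t‖ ≤ ‖B‖ * M := fun t ht => by
    refine (ContinuousLinearMap.opNorm_comp_le _ _).trans ?_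
    rw [ContinuousLinearMap.adjoint.norm_map, ContinuousLinearMap.adjoint.norm_map]
    exact mul_le_mul_of_nonneg_left (hM _ ⟨by linarith [ht.2], by linarith [ht.1]⟩)
      (norm_nonneg B)
  have hint : ∀ x, IntegrableOn (fun t => ‖S t x‖) (Set.Ioc 0 τ) := fun x =>
    integrableOn_norm_of_continuous_inner (hSw x) measure_Ioc_lt_top measurableSet_Ioc
      fun t ht => (S t).le_of_opNorm_le (hSM t ht) x
  refine ⟨integralNormSeminorm S _ _ hint,
    continuous_integralNormSeminorm hint measure_Ioc_lt_top hSM, fun x => rfl,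
    fun x hx t ht => ?_⟩
  simpa [S] using eqOn_zero_of_integral_norm_eq_zero (hSw x) hτ (hint x) hx
    (x := τ - t) ⟨by linarith [ht.2], by linarith [ht.1]⟩

end Observation

theorem stmt9_general {X U : Type*} [NormedAddCommGroup X] [InnerProductSpace ℝ X] [CompleteSpace X]
    [NormedAddCommGroup U] [InnerProductSpace ℝ U] [CompleteSpace U]
    (T : ℝ → X →L[ℝ] X) (B : U →L[ℝ] X)
    (hTcont : ∀ x : X, Continuous fun t => T t x)
    (r : ℝ) (hr : 0 < r) (ψ : X)
    -- approximate observability in any time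
    (hobs : ∀ τ' : ℝ, 0 < τ' → ∀ η : X,
      (∀ t ∈ Set.Icc 0 τ', B.adjoint ((T t).adjoint η) = 0) → η = 0) :
    ∀ τ : ℝ, 0 < τ →
      Continuous (Jfun T B r ψ τ) ∧
      StrictConvexOn ℝ Set.univ (Jfun T B r ψ τ) ∧
      Tendsto (Jfun T B r ψ τ) (Bornology.cobounded X) atTop ∧
      ∃! η : X, ∀ ξ : X, Jfun T B r ψ τ η ≤ Jfun T B r ψ τ ξ := by
  intro τ hτ
  obtain ⟨p, hpc, hpJ, hp⟩ := exists_seminorm_eq_integral_norm_adjoint T B hTcont hτ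
  have hp_def : ∀ η, p η = 0 → η = 0 := fun η hη => hobs τ hτ η (hp η hη)
  have hJ : Jfun T B r ψ τ = fun η => 1 / 2 * p η ^ 2 + ⟪T τ ψ, η⟫ + r * ‖η‖ := by
    ext η
    rw [Jfun, hpJ, ContinuousLinearMap.adjoint_inner_right]
  rw [hJ]
  have hcont : Continuous fun η => 1 / 2 * p η ^ 2 + ⟪T τ ψ, η⟫ + r * ‖η‖ := by fun_prop
  have hsc := p.strictConvexOn_half_sq_add_inner_add_norm hp_def (T τ ψ) hr
  have hcoer := p.tendsto_half_sq_add_inner_add_norm_cobounded hpc.lowerSemicontinuous hp_def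
    (T τ ψ) hr
  obtain ⟨η, hη⟩ := hcont.lowerSemicontinuous.exists_forall_le_of_convexOn hsc.convexOn hcoer
  exact ⟨hcont, hsc, hcoer, η, hη, fun ξ hξ =>
    hsc.eq_of_isMinOn (isMinOn_univ_iff.2 hξ) (isMinOn_univ_iff.2 hη) trivial trivial⟩

/-- If `(A*, B*)` is approximately observable in any time, then for every
`τ > 0` the functional `J^τ` is continuous, strictly convex and coercive on `X`, and hence
has a unique minimizer. -/
theorem stmt9 {X U : Type*} [NormedAddCommGroup X] [InnerProductSpace ℝ X] [CompleteSpace X]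
    [NormedAddCommGroup U] [InnerProductSpace ℝ U] [CompleteSpace U]
    (T : ℝ → X →L[ℝ] X) (B : U →L[ℝ] X)
    (hT0 : T 0 = 1)
    (hTadd : ∀ s t : ℝ, 0 ≤ s → 0 ≤ t → T (s + t) = (T s).comp (T t))
    (hTcont : ∀ x : X, Continuous fun t => T t x)
    (r : ℝ) (hr : 0 < r) (ψ : X)
    -- approximate observability in any time
    (hobs : ∀ τ' : ℝ, 0 < τ' → ∀ η : X,
      (∀ t ∈ Set.Icc 0 τ', B.adjoint ((T t).adjoint η) = 0) → η = 0) :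
    ∀ τ : ℝ, 0 < τ →
      Continuous (Jfun T B r ψ τ) ∧
      StrictConvexOn ℝ Set.univ (Jfun T B r ψ τ) ∧
      Tendsto (Jfun T B r ψ τ) (Bornology.cobounded X) atTop ∧
      ∃! η : X, ∀ ξ : X, Jfun T B r ψ τ η ≤ Jfun T B r ψ τ ξ :=
  stmt9_general T B hTcont r hr ψ hobs
end

section
/- With J^τ as above, T_τψ ∉ B(0,r) if and only if 0 is not the minimizer of J^τ over X. -/
open MeasureTheory Filter
open scoped RealInnerProductSpace

/-- With `J^τ` as above (assumed to have a unique minimizer),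
`T_τ ψ ∉ B(0,r)` if and only if `0` is not the minimizer of `J^τ` over `X`. -/
theorem stmt10 {X U : Type*} [NormedAddCommGroup X] [InnerProductSpace ℝ X] [CompleteSpace X]
    [NormedAddCommGroup U] [InnerProductSpace ℝ U] [CompleteSpace U]
    (T : ℝ → X →L[ℝ] X) (B : U →L[ℝ] X)
    (hT0 : T 0 = 1)
    (hTadd : ∀ s t : ℝ, 0 ≤ s → 0 ≤ t → T (s + t) = (T s).comp (T t))
    (hTcont : ∀ x : X, Continuous fun t => T t x)
    (r : ℝ) (hr : 0 < r) (ψ : X) (τ : ℝ) (hτ : 0 < τ)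
    (hmin : ∃! η : X, ∀ ξ : X, Jfun T B r ψ τ η ≤ Jfun T B r ψ τ ξ) :
    T τ ψ ∉ Metric.closedBall (0 : X) r ↔
      ¬ (∀ ξ : X, Jfun T B r ψ τ 0 ≤ Jfun T B r ψ τ ξ) := by
  rw [mem_closedBall_zero_iff]
  set v : X := T τ ψ with hv
  have hJ0 : Jfun T B r ψ τ 0 = 0 := by
    simp [Jfun]
  apply not_congr
  constructor
  · -- ‖v‖ ≤ r → 0 is a minimizer
    intro hle ξ
    rw [hJ0]
    have hinner : ⟪ψ, (T τ).adjoint ξ⟫ = ⟪v, ξ⟫ := by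
      rw [ContinuousLinearMap.adjoint_inner_right]
    have hcs : |⟪v, ξ⟫| ≤ ‖v‖ * ‖ξ‖ := abs_real_inner_le_norm v ξ
    have h1 : -(‖v‖ * ‖ξ‖) ≤ ⟪v, ξ⟫ := neg_le_of_abs_le hcs
    have hsq : (0:ℝ) ≤ (1 / 2) *
        (∫ t in Set.Ioc 0 τ, ‖B.adjoint ((T (τ - t)).adjoint ξ)‖) ^ 2 := by positivity
    have hξ : (0:ℝ) ≤ ‖ξ‖ := norm_nonneg ξ
    unfold Jfun
    rw [hinner]
    nlinarith [mul_le_mul_of_nonneg_right hle hξ]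
  · -- 0 is a minimizer → ‖v‖ ≤ r
    intro hminz
    by_contra hgt
    push_neg at hgt
    have hvpos : 0 < ‖v‖ := lt_trans hr hgt
    set I : ℝ := ∫ t in Set.Ioc 0 τ, ‖B.adjoint ((T (τ - t)).adjoint (-v))‖ with hI
    set a : ℝ := r * ‖v‖ - ‖v‖ ^ 2 with ha
    have hane : a < 0 := by nlinarith
    set s : ℝ := min 1 ((-a) / (I ^ 2 + 1)) with hs
    have hIpos : (0:ℝ) < I ^ 2 + 1 := by positivity
    have hspos : 0 < s := lt_min one_pos (div_pos (by linarith) hIpos)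
    have hs1 : s ≤ 1 := min_le_left _ _
    have hsle : s * (I ^ 2 + 1) ≤ -a := by
      rw [← le_div_iff₀ hIpos]
      exact min_le_right _ _
    have key : Jfun T B r ψ τ (s • (-v)) < 0 := by
      have hint : (∫ t in Set.Ioc 0 τ,
          ‖B.adjoint ((T (τ - t)).adjoint (s • (-v)))‖) = s * I := by
        rw [hI, ← MeasureTheory.integral_const_mul]
        congr 1
        ext t
        rw [_root_.map_smul, _root_.map_smul, norm_smul, Real.norm_eq_abs,
          abs_of_pos hspos]
      have hinner : ⟪ψ, (T τ).adjoint (s • (-v))⟫ = s * (-‖v‖ ^ 2) := by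
        rw [ContinuousLinearMap.adjoint_inner_right, real_inner_smul_right,
          inner_neg_right, real_inner_self_eq_norm_sq]
      have hnorm : ‖s • (-v)‖ = s * ‖v‖ := by
        rw [norm_smul, norm_neg, Real.norm_eq_abs, abs_of_pos hspos]
      unfold Jfun
      rw [hint, hinner, hnorm]
      have : (1 / 2) * (s * I) ^ 2 + s * (-‖v‖ ^ 2) + r * (s * ‖v‖)
          = s * ((1 / 2) * s * I ^ 2 + a) := by rw [ha]; ring
      rw [this]
      apply mul_neg_of_pos_of_neg hspos
      nlinarith [sq_nonneg I, mul_pos hspos hIpos]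
    have := hminz (s • (-v))
    rw [hJ0] at this
    linarith
end

section
/- Suppose T_τψ ∉ B(0,r), the unique continuation property (B*T*_tη = 0 on a set of positive measure ⟹ η = 0) holds, and let η̂ be the minimizer of J^τ. Then f̂(t) = (∫_0^τ ||B*T*_{τ-s}η̂||_U ds) · B*T*_{τ-t}η̂ / ||B*T*_{τ-t}η̂||_U is the norm optimal control for (NP)^τ, and the optimal norm satisfies N*(τ) = ∫_0^τ ||B*T*_{τ-t}η̂||_U dt. -/
open MeasureTheory Filter
open scoped RealInnerProductSpace

open Topology TopologicalSpace Set

/-! When `‖T_τ ψ‖ > r`, the functional `J^τ` takes negative values (test `η = -ε T_τ ψ`), so its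
minimizer `η̂` is nonzero, and by unique continuation `φ(t) = B* T*_{τ-t} η̂` vanishes only on a
null set. Hence `J^τ` is Gâteaux differentiable at `η̂`, and the Euler–Lagrange equation says
`⟪T_τ ψ + ∫ T_{τ-t} B f̂(t) dt, ξ⟫ = -r ⟪η̂ / ‖η̂‖, ξ⟫` for all `ξ`: the control `f̂` steers `ψ`
to the point `-r η̂ / ‖η̂‖` of the sphere. Testing it with `ξ = η̂` gives
`N² = -⟪T_τ ψ, η̂⟫ - r ‖η̂‖`. If a control `g` with `‖g‖ ≤ C` also reaches the ball, then
`-r ‖η̂‖ ≤ ⟪z(τ), η̂⟫ = ⟪T_τ ψ, η̂⟫ + ∫ ⟪g, φ⟫ ≤ ⟪T_τ ψ, η̂⟫ + C N`, that is `N² ≤ C N`.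

Since `φ` is only weakly continuous, its measurability rests on Pettis' theorem: a weakly
continuous function on a separable space has separable range and measurable distance functions. -/

section StronglyContinuous

variable {β E F : Type*} [TopologicalSpace β] [NormedAddCommGroup E] [NormedSpace ℝ E]
  [CompleteSpace E] [NormedAddCommGroup F] [NormedSpace ℝ F] {A : β → E →L[ℝ] F}

theorem IsCompact.exists_opNorm_le_of_continuousOn_apply {K : Set β} (hK : IsCompact K)
    (hA : ∀ x, ContinuousOn (fun t => A t x) K) : ∃ M, ∀ t ∈ K, ‖A t‖ ≤ M := by
  have hpt : ∀ x, ∃ C, ∀ t : K, ‖A t x‖ ≤ C := fun x => by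
    obtain ⟨C, hC⟩ := hK.exists_bound_of_continuousOn (hA x)
    exact ⟨C, fun t => hC t t.2⟩
  obtain ⟨M, hM⟩ := banach_steinhaus hpt
  exact ⟨M, fun t ht => hM ⟨t, ht⟩⟩

theorem continuous_uncurry_of_continuous_apply [WeaklyLocallyCompactSpace β]
    (hA : ∀ x, Continuous fun t => A t x) : Continuous fun p : β × E => A p.1 p.2 := by
  refine continuous_iff_continuousAt.2 fun ⟨t₀, x₀⟩ => ?_
  obtain ⟨K, hK, hKt₀⟩ := exists_compact_mem_nhds t₀
  obtain ⟨M, hM⟩ := hK.exists_opNorm_le_of_continuousOn_apply fun x => (hA x).continuousOn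
  rw [ContinuousAt, tendsto_iff_norm_sub_tendsto_zero]
  have hbound : Tendsto (fun p : β × E => M * ‖p.2 - x₀‖ + ‖A p.1 x₀ - A t₀ x₀‖)
      (𝓝 (t₀, x₀)) (𝓝 0) := by
    have hc : Continuous fun p : β × E => M * ‖p.2 - x₀‖ + ‖A p.1 x₀ - A t₀ x₀‖ :=
      (continuous_const.mul (continuous_snd.sub continuous_const).norm).add
        (((hA x₀).comp continuous_fst).sub continuous_const).norm
    simpa using hc.tendsto (t₀, x₀)
  refine squeeze_zero_norm' ?_ hbound
  filter_upwards [continuous_fst.continuousAt.preimage_mem_nhds hKt₀] with ⟨t, x⟩ ht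
  have hsplit : A t x - A t₀ x₀ = A t (x - x₀) + (A t x₀ - A t₀ x₀) := by
    rw [map_sub]; abel
  rw [norm_norm, hsplit]
  refine (norm_add_le _ _).trans ?_
  gcongr
  exact ((A t).le_opNorm _).trans (mul_le_mul_of_nonneg_right (hM t ht) (norm_nonneg _))

end StronglyContinuous

section Pettis

variable {β U : Type*} [NormedAddCommGroup U] [InnerProductSpace ℝ U]
  [TopologicalSpace β] {φ : β → U}

theorem isSeparable_range_of_continuous_inner [CompleteSpace U] [SeparableSpace β]
    (hφ : ∀ u, Continuous fun t => ⟪φ t, u⟫) : IsSeparable (range φ) := by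
  obtain ⟨D, hDc, hDd⟩ := exists_countable_dense β
  set Y : Submodule ℝ U := (Submodule.span ℝ (φ '' D)).topologicalClosure
  have hY : IsSeparable (Y : Set U) := by
    rw [Submodule.topologicalClosure_coe]
    exact ((hDc.image φ).isSeparable.span).closure
  refine hY.mono (range_subset_iff.2 fun t => ?_)
  rw [SetLike.mem_coe, ← Submodule.orthogonal_orthogonal Y, Submodule.mem_orthogonal']
  intro w hw
  have hzero : (fun t => ⟪φ t, w⟫) = 0 := (hφ w).ext_on hDd continuous_const fun s hs =>
    (real_inner_comm w (φ s)).trans <| (Submodule.mem_orthogonal' Y w).1 hw _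
      (Submodule.le_topologicalClosure _ (Submodule.subset_span (mem_image_of_mem φ hs)))
  exact congrFun hzero t

theorem measurable_norm_sub_of_continuous_inner [MeasurableSpace β] [OpensMeasurableSpace β]
    (hφ : ∀ u, Continuous fun t => ⟪φ t, u⟫) (c : U) : Measurable fun t => ‖φ t - c‖ := by
  refine LowerSemicontinuous.measurable fun t y hy => ?_
  set v := φ t - c
  have hy : y < ‖v‖ := hy
  rcases (norm_nonneg v).eq_or_lt with hv | hv
  · exact Eventually.of_forall fun s => (hv ▸ hy).trans_le (norm_nonneg _)
  have hcont : Continuous fun s => ⟪φ s - c, v⟫ := by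
    simp only [inner_sub_left]; exact (hφ v).sub continuous_const
  have hlt : y * ‖v‖ < ⟪φ t - c, v⟫ := by
    rw [real_inner_self_eq_norm_mul_norm]; exact mul_lt_mul_of_pos_right hy hv
  filter_upwards [hcont.continuousAt.eventually (lt_mem_nhds hlt)] with s hs
  exact lt_of_mul_lt_mul_right (hs.trans_le (real_inner_le_norm _ _)) hv.le

theorem measurable_of_isSeparable_range_of_measurable_dist {α γ : Type*} [MeasurableSpace α]
    [PseudoMetricSpace γ] [MeasurableSpace γ] [BorelSpace γ] {f : α → γ}
    (hsep : IsSeparable (range f)) (hf : ∀ c, Measurable fun t => dist (f t) c) :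
    Measurable f := by
  obtain ⟨D, hDc, hD⟩ := hsep
  refine measurable_of_isOpen fun O hO => ?_
  have hpre : f ⁻¹' O = ⋃ c ∈ D, ⋃ q : ℚ,
      {t | dist (f t) c < q} ∩ {_t | Metric.ball c q ⊆ O} := by
    ext t
    simp only [mem_preimage, mem_iUnion, mem_inter_iff, mem_ofPred_eq, exists_prop]
    refine ⟨fun ht => ?_, fun ⟨c, _, q, hq, hsub⟩ => hsub hq⟩
    obtain ⟨ε, hε, hball⟩ := Metric.isOpen_iff.1 hO _ ht
    obtain ⟨c, hcD, hc⟩ := Metric.mem_closure_iff.1 (hD ⟨t, rfl⟩) (ε / 2) (half_pos hε)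
    obtain ⟨q, hcq, hqε⟩ := exists_rat_btwn hc
    refine ⟨c, hcD, q, hcq, fun y hy => hball ?_⟩
    rw [Metric.mem_ball] at hy ⊢
    linarith [dist_triangle y c (f t), dist_comm c (f t)]
  rw [hpre]
  exact .biUnion hDc fun c _ => .iUnion fun q => (hf c measurableSet_Iio).inter (.const _)

theorem stronglyMeasurable_of_continuous_inner [CompleteSpace U] [SeparableSpace β]
    [MeasurableSpace β] [OpensMeasurableSpace β] (hφ : ∀ u, Continuous fun t => ⟪φ t, u⟫) :
    StronglyMeasurable φ := by
  borelize U
  refine stronglyMeasurable_iff_measurable_separable.2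
    ⟨measurable_of_isSeparable_range_of_measurable_dist (isSeparable_range_of_continuous_inner hφ)
      fun c => ?_, isSeparable_range_of_continuous_inner hφ⟩
  simpa only [dist_eq_norm] using measurable_norm_sub_of_continuous_inner hφ c

end Pettis

section NormDerivative

variable {U α : Type*} [NormedAddCommGroup U] [InnerProductSpace ℝ U] [MeasurableSpace α]
  {μ : Measure α}

theorem hasDerivAt_norm_add_smul {v : U} (hv : v ≠ 0) (w : U) :
    HasDerivAt (fun s : ℝ => ‖v + s • w‖) ⟪‖v‖⁻¹ • v, w⟫ 0 := by
  have hline : HasDerivAt (fun s : ℝ => v + s • w) w 0 := by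
    simpa using ((hasDerivAt_id (0 : ℝ)).smul_const w).const_add v
  have hsq := hline.norm_sq.sqrt (by simpa using hv)
  convert hsq using 1
  · exact funext fun s => (Real.sqrt_sq (norm_nonneg _)).symm
  · have : ‖v‖ ≠ 0 := norm_ne_zero_iff.2 hv
    simp only [zero_smul, add_zero, Real.sqrt_sq (norm_nonneg v), real_inner_smul_left]
    field_simp

theorem hasDerivAt_integral_norm_add_smul {a b : α → U} (ha : Integrable a μ)
    (hb : Integrable b μ) (ha0 : ∀ᵐ t ∂μ, a t ≠ 0) :
    HasDerivAt (fun s : ℝ => ∫ t, ‖a t + s • b t‖ ∂μ) (∫ t, ⟪‖a t‖⁻¹ • a t, b t⟫ ∂μ) 0 := by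
  have hlip : ∀ t, LipschitzWith (Real.nnabs ‖b t‖) fun s : ℝ => ‖a t + s • b t‖ := fun t =>
    LipschitzWith.of_dist_le_mul fun s s' => by
      rw [Real.coe_nnabs, abs_norm]
      calc dist ‖a t + s • b t‖ ‖a t + s' • b t‖ ≤ ‖(a t + s • b t) - (a t + s' • b t)‖ :=
            dist_norm_norm_le _ _
        _ = ‖b t‖ * dist s s' := by
          rw [add_sub_add_left_eq_sub, ← sub_smul, norm_smul, Real.norm_eq_abs, Real.dist_eq,
            mul_comm]
  refine (hasDerivAt_integral_of_dominated_loc_of_lip (Metric.ball_mem_nhds 0 one_pos)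
    (Eventually.of_forall fun s => (ha.add (hb.smul s)).norm.aestronglyMeasurable)
    (by simpa using ha.norm) ?_ (Eventually.of_forall fun t => (hlip t).lipschitzOnWith)
    hb.norm ?_).2
  · exact (ha.1.norm.aemeasurable.inv.aestronglyMeasurable.smul ha.1).inner hb.1
  · filter_upwards [ha0] with t ht using hasDerivAt_norm_add_smul ht (b t)

end NormDerivative

section DualProblem

variable {X U α : Type*} [NormedAddCommGroup X] [InnerProductSpace ℝ X] [CompleteSpace X]
  [NormedAddCommGroup U] [InnerProductSpace ℝ U] [CompleteSpace U] [MeasurableSpace α]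
  {μ : Measure α} {L : α → U →L[ℝ] X} {c η : X} {r : ℝ}

variable (μ L) in
noncomputable def dualFunctional (c : X) (r : ℝ) (η : X) : ℝ :=
  1 / 2 * (∫ t, ‖(L t).adjoint η‖ ∂μ) ^ 2 + ⟪c, η⟫ + r * ‖η‖

variable (μ L) in
noncomputable def normOptimalControl (η : X) (t : α) : U :=
  (∫ s, ‖(L s).adjoint η‖ ∂μ) • (‖(L t).adjoint η‖⁻¹ • (L t).adjoint η)

@[simp]
theorem dualFunctional_zero : dualFunctional μ L c r 0 = 0 := by
  simp [dualFunctional]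

theorem exists_dualFunctional_neg (hr : 0 ≤ r) (hc : r < ‖c‖) :
    ∃ η, dualFunctional μ L c r η < 0 := by
  set K := ∫ t, ‖(L t).adjoint c‖ ∂μ
  have hgap : 0 < ‖c‖ * (‖c‖ - r) := mul_pos (hr.trans_lt hc) (sub_pos.2 hc)
  set ε := ‖c‖ * (‖c‖ - r) / (K ^ 2 + 1)
  have hε : 0 < ε := div_pos hgap (by positivity)
  have hεK : ε * K ^ 2 ≤ ‖c‖ * (‖c‖ - r) := by
    calc ε * K ^ 2 ≤ ε * (K ^ 2 + 1) := by gcongr; linarith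
      _ = ‖c‖ * (‖c‖ - r) := div_mul_cancel₀ _ (by positivity)
  -- `J (-(ε • c)) = ε * (½ ε K² - ‖c‖ (‖c‖ - r))`, and `ε K² ≤ ‖c‖ (‖c‖ - r)`
  refine ⟨-(ε • c), ?_⟩
  have hint : ∫ t, ‖(L t).adjoint (-(ε • c))‖ ∂μ = ε * K := by
    simp only [map_neg, map_smul, norm_neg, norm_smul, Real.norm_of_nonneg hε.le,
      integral_const_mul, K]
  rw [dualFunctional, hint, inner_neg_right, real_inner_smul_right, real_inner_self_eq_norm_sq,
    norm_neg, norm_smul, Real.norm_of_nonneg hε.le]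
  nlinarith [mul_le_mul_of_nonneg_left hεK hε.le, mul_pos hε hgap]

theorem dualFunctional_neg_of_isMin (hr : 0 ≤ r) (hc : r < ‖c‖)
    (hmin : ∀ ξ, dualFunctional μ L c r η ≤ dualFunctional μ L c r ξ) :
    dualFunctional μ L c r η < 0 :=
  let ⟨_, hξ⟩ := exists_dualFunctional_neg (μ := μ) (L := L) hr hc
  (hmin _).trans_lt hξ

theorem ne_zero_of_isMin_dualFunctional (hr : 0 ≤ r) (hc : r < ‖c‖)
    (hmin : ∀ ξ, dualFunctional μ L c r η ≤ dualFunctional μ L c r ξ) : η ≠ 0 := by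
  rintro rfl
  simpa using dualFunctional_neg_of_isMin hr hc hmin

theorem hasDerivAt_dualFunctional_add_smul (hL : ∀ ξ, Integrable (fun t => (L t).adjoint ξ) μ)
    (hη : η ≠ 0) (hLη : ∀ᵐ t ∂μ, (L t).adjoint η ≠ 0) (ξ : X) :
    HasDerivAt (fun s : ℝ => dualFunctional μ L c r (η + s • ξ))
      (∫ t, ⟪normOptimalControl μ L η t, (L t).adjoint ξ⟫ ∂μ + ⟪c, ξ⟫ + r * ⟪‖η‖⁻¹ • η, ξ⟫) 0 := by
  have hquad := ((hasDerivAt_integral_norm_add_smul (hL η) (hL ξ) hLη).pow 2).const_mul (1 / 2)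
  have hlin : HasDerivAt (fun s : ℝ => ⟪c, η + s • ξ⟫) ⟪c, ξ⟫ 0 := by
    simpa [inner_add_right, real_inner_smul_right] using
      ((hasDerivAt_id (0 : ℝ)).mul_const ⟪c, ξ⟫).const_add ⟪c, η⟫
  have hJ : (fun s : ℝ => dualFunctional μ L c r (η + s • ξ)) = fun s =>
      1 / 2 * (∫ t, ‖(L t).adjoint η + s • (L t).adjoint ξ‖ ∂μ) ^ 2 + ⟪c, η + s • ξ⟫ +
        r * ‖η + s • ξ‖ := by
    funext s
    simp [dualFunctional]
  rw [hJ]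
  refine ((hquad.add hlin).add ((hasDerivAt_norm_add_smul hη ξ).const_mul r)).congr_deriv ?_
  simp only [normOptimalControl, zero_smul, add_zero, real_inner_smul_left, integral_const_mul]
  ring

theorem dualFunctional_eulerLagrange (hL : ∀ ξ, Integrable (fun t => (L t).adjoint ξ) μ)
    (hη : η ≠ 0) (hLη : ∀ᵐ t ∂μ, (L t).adjoint η ≠ 0)
    (hmin : ∀ ξ, dualFunctional μ L c r η ≤ dualFunctional μ L c r ξ) (ξ : X) :
    ∫ t, ⟪normOptimalControl μ L η t, (L t).adjoint ξ⟫ ∂μ + ⟪c, ξ⟫ + r * ⟪‖η‖⁻¹ • η, ξ⟫ = 0 :=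
  IsLocalMin.hasDerivAt_eq_zero (Eventually.of_forall fun s => by simpa using hmin (η + s • ξ))
    (hasDerivAt_dualFunctional_add_smul hL hη hLη ξ)

theorem inner_integral_apply_eq_integral_inner_adjoint {g : α → U}
    (hg : Integrable (fun t => L t (g t)) μ) (ξ : X) :
    ⟪∫ t, L t (g t) ∂μ, ξ⟫ = ∫ t, ⟪g t, (L t).adjoint ξ⟫ ∂μ := by
  rw [real_inner_comm, ← integral_inner hg]
  congr with t
  rw [← ContinuousLinearMap.adjoint_inner_left, real_inner_comm]

theorem aestronglyMeasurable_normOptimalControl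
    (h : AEStronglyMeasurable (fun t => (L t).adjoint η) μ) :
    AEStronglyMeasurable (normOptimalControl μ L η) μ :=
  (h.norm.aemeasurable.inv.aestronglyMeasurable.smul h).const_smul _

theorem norm_normOptimalControl_le (t : α) :
    ‖normOptimalControl μ L η t‖ ≤ ∫ s, ‖(L s).adjoint η‖ ∂μ := by
  have hN : 0 ≤ ∫ s, ‖(L s).adjoint η‖ ∂μ := integral_nonneg fun _ => norm_nonneg _
  rw [normOptimalControl, norm_smul, Real.norm_of_nonneg hN]
  refine mul_le_of_le_one_right hN ?_
  rcases eq_or_ne ((L t).adjoint η) 0 with h | h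
  · simp [h]
  · exact (norm_smul_inv_norm h).le

theorem norm_normOptimalControl_of_ne_zero {t : α} (ht : (L t).adjoint η ≠ 0) :
    ‖normOptimalControl μ L η t‖ = ∫ s, ‖(L s).adjoint η‖ ∂μ := by
  rw [normOptimalControl, norm_smul, norm_smul, norm_inv, norm_norm,
    inv_mul_cancel₀ (norm_ne_zero_iff.2 ht), mul_one,
    Real.norm_of_nonneg (integral_nonneg fun _ => norm_nonneg _)]

theorem integral_inner_normOptimalControl_self (hLη : ∀ᵐ t ∂μ, (L t).adjoint η ≠ 0) :
    ∫ t, ⟪normOptimalControl μ L η t, (L t).adjoint η⟫ ∂μ = (∫ t, ‖(L t).adjoint η‖ ∂μ) ^ 2 := by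
  rw [sq, ← integral_const_mul]
  refine integral_congr_ae ?_
  filter_upwards [hLη] with t ht
  rw [normOptimalControl, real_inner_smul_left, real_inner_smul_left,
    real_inner_self_eq_norm_mul_norm, inv_mul_cancel_left₀ (norm_ne_zero_iff.2 ht)]

theorem add_integral_normOptimalControl (hL : ∀ ξ, Integrable (fun t => (L t).adjoint ξ) μ)
    (hη : η ≠ 0) (hLη : ∀ᵐ t ∂μ, (L t).adjoint η ≠ 0)
    (hmin : ∀ ξ, dualFunctional μ L c r η ≤ dualFunctional μ L c r ξ)
    (hf : Integrable (fun t => L t (normOptimalControl μ L η t)) μ) :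
    c + ∫ t, L t (normOptimalControl μ L η t) ∂μ = -(r * ‖η‖⁻¹) • η := by
  refine ext_inner_right ℝ fun ξ => ?_
  have hEL := dualFunctional_eulerLagrange hL hη hLη hmin ξ
  rw [real_inner_smul_left] at hEL
  rw [inner_add_left, inner_integral_apply_eq_integral_inner_adjoint hf, real_inner_smul_left]
  linear_combination hEL

theorem norm_add_integral_normOptimalControl (hL : ∀ ξ, Integrable (fun t => (L t).adjoint ξ) μ)
    (hη : η ≠ 0) (hLη : ∀ᵐ t ∂μ, (L t).adjoint η ≠ 0)
    (hmin : ∀ ξ, dualFunctional μ L c r η ≤ dualFunctional μ L c r ξ) (hr : 0 ≤ r)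
    (hf : Integrable (fun t => L t (normOptimalControl μ L η t)) μ) :
    ‖c + ∫ t, L t (normOptimalControl μ L η t) ∂μ‖ = r := by
  rw [add_integral_normOptimalControl hL hη hLη hmin hf, norm_smul, norm_neg, norm_mul, norm_inv,
    norm_norm, Real.norm_of_nonneg hr, mul_assoc, inv_mul_cancel₀ (norm_ne_zero_iff.2 hη),
    mul_one]

theorem sq_integral_norm_adjoint (hL : ∀ ξ, Integrable (fun t => (L t).adjoint ξ) μ)
    (hη : η ≠ 0) (hLη : ∀ᵐ t ∂μ, (L t).adjoint η ≠ 0)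
    (hmin : ∀ ξ, dualFunctional μ L c r η ≤ dualFunctional μ L c r ξ) :
    (∫ t, ‖(L t).adjoint η‖ ∂μ) ^ 2 = -(⟪c, η⟫ + r * ‖η‖) := by
  have h := dualFunctional_eulerLagrange hL hη hLη hmin η
  rw [integral_inner_normOptimalControl_self hLη, real_inner_smul_left,
    real_inner_self_eq_norm_mul_norm, inv_mul_cancel_left₀ (norm_ne_zero_iff.2 hη)] at h
  linarith

-- By `sq_integral_norm_adjoint` the minimum value is `-½ N²`, and it is negative.
theorem integral_norm_adjoint_pos (hL : ∀ ξ, Integrable (fun t => (L t).adjoint ξ) μ)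
    (hη : η ≠ 0) (hLη : ∀ᵐ t ∂μ, (L t).adjoint η ≠ 0)
    (hmin : ∀ ξ, dualFunctional μ L c r η ≤ dualFunctional μ L c r ξ)
    (hr : 0 ≤ r) (hc : r < ‖c‖) :
    0 < ∫ t, ‖(L t).adjoint η‖ ∂μ := by
  have hneg := dualFunctional_neg_of_isMin hr hc hmin
  have hsq := sq_integral_norm_adjoint hL hη hLη hmin
  rw [dualFunctional] at hneg
  refine (integral_nonneg fun _ => norm_nonneg _).lt_of_ne fun h => ?_
  rw [← h] at hsq hneg
  linarith

theorem integral_norm_adjoint_le_of_mem_closedBall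
    (hL : ∀ ξ, Integrable (fun t => (L t).adjoint ξ) μ) (hη : η ≠ 0)
    (hLη : ∀ᵐ t ∂μ, (L t).adjoint η ≠ 0)
    (hmin : ∀ ξ, dualFunctional μ L c r η ≤ dualFunctional μ L c r ξ)
    (hr : 0 ≤ r) (hc : r < ‖c‖) {g : α → U} {C : ℝ} (hg : Integrable (fun t => L t (g t)) μ)
    (hgC : ∀ᵐ t ∂μ, ‖g t‖ ≤ C)
    (hball : c + ∫ t, L t (g t) ∂μ ∈ Metric.closedBall 0 r) :
    ∫ t, ‖(L t).adjoint η‖ ∂μ ≤ C := by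
  set N := ∫ t, ‖(L t).adjoint η‖ ∂μ
  have hpair : ⟪c + ∫ t, L t (g t) ∂μ, η⟫ = ⟪c, η⟫ + ∫ t, ⟪g t, (L t).adjoint η⟫ ∂μ := by
    rw [inner_add_left, inner_integral_apply_eq_integral_inner_adjoint hg]
  have hlow : -(r * ‖η‖) ≤ ⟪c + ∫ t, L t (g t) ∂μ, η⟫ := by
    refine (neg_le_neg ?_).trans (neg_abs_le _)
    exact (abs_real_inner_le_norm _ _).trans
      (mul_le_mul_of_nonneg_right (mem_closedBall_zero_iff.1 hball) (norm_nonneg _))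
  have hup : ∫ t, ⟪g t, (L t).adjoint η⟫ ∂μ ≤ C * N := by
    rw [← integral_const_mul]
    refine integral_mono_ae ?_ ((hL η).norm.const_mul C) ?_
    · exact (hg.inner_const η).congr (Eventually.of_forall fun t =>
        (ContinuousLinearMap.adjoint_inner_right _ _ _).symm)
    · filter_upwards [hgC] with t ht
      exact (real_inner_le_norm _ _).trans (mul_le_mul_of_nonneg_right ht (norm_nonneg _))
  have hsq := sq_integral_norm_adjoint hL hη hLη hmin
  have hpos := integral_norm_adjoint_pos hL hη hLη hmin hr hc
  nlinarith

theorem normOptimalControl_spec (hr : 0 ≤ r) (hc : r < ‖c‖)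
    (hmin : ∀ ξ, dualFunctional μ L c r η ≤ dualFunctional μ L c r ξ)
    (hL : ∀ ξ, Integrable (fun t => (L t).adjoint ξ) μ) (hLη : ∀ᵐ t ∂μ, (L t).adjoint η ≠ 0)
    (hLg : ∀ (g : α → U) (C : ℝ), AEStronglyMeasurable g μ → (∀ᵐ t ∂μ, ‖g t‖ ≤ C) →
      Integrable (fun t => L t (g t)) μ) :
    (∀ᵐ t ∂μ, ‖normOptimalControl μ L η t‖ = ∫ t, ‖(L t).adjoint η‖ ∂μ) ∧
      c + ∫ t, L t (normOptimalControl μ L η t) ∂μ ∈ Metric.closedBall 0 r ∧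
      ∀ (g : α → U) (C : ℝ), AEStronglyMeasurable g μ → (∀ᵐ t ∂μ, ‖g t‖ ≤ C) →
        c + ∫ t, L t (g t) ∂μ ∈ Metric.closedBall 0 r → ∫ t, ‖(L t).adjoint η‖ ∂μ ≤ C := by
  have hη := ne_zero_of_isMin_dualFunctional hr hc hmin
  have hf := hLg _ _ (aestronglyMeasurable_normOptimalControl (hL η).1)
    (Eventually.of_forall norm_normOptimalControl_le)
  refine ⟨?_, ?_, fun g C hg hgC => integral_norm_adjoint_le_of_mem_closedBall hL hη hLη hmin hr
    hc (hLg g C hg hgC) hgC⟩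
  · filter_upwards [hLη] with t ht using norm_normOptimalControl_of_ne_zero ht
  · exact mem_closedBall_zero_iff.2 (norm_add_integral_normOptimalControl hL hη hLη hmin hr hf).le

end DualProblem

theorem MeasureTheory.StronglyMeasurable.ae_ne_zero {α E : Type*} [MeasurableSpace α]
    {μ : Measure α} [TopologicalSpace E] [MetrizableSpace E] [Zero E] {F : α → E}
    (hF : StronglyMeasurable F)
    (h : ∀ s, MeasurableSet s → 0 < μ s → (∀ t ∈ s, F t = 0) → False) : ∀ᵐ t ∂μ, F t ≠ 0 := by
  refine ae_iff.2 (by_contra fun hpos => h {t | F t = 0}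
    (hF.measurableSet_eq_fun stronglyMeasurable_const) ?_ fun _ ht => ht)
  simpa [pos_iff_ne_zero] using hpos

section StronglyContinuousFamily

variable {X U : Type*} [NormedAddCommGroup X] [InnerProductSpace ℝ X]
  [NormedAddCommGroup U] [InnerProductSpace ℝ U] [CompleteSpace U] {A : ℝ → U →L[ℝ] X}
  {s : Set ℝ}

theorem stronglyMeasurable_adjoint_apply [CompleteSpace X] (hA : ∀ u, Continuous fun t => A t u)
    (η : X) : StronglyMeasurable fun t => (A t).adjoint η :=
  stronglyMeasurable_of_continuous_inner fun u => by
    simpa only [ContinuousLinearMap.adjoint_inner_left] using continuous_const.inner (hA u)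

theorem integrableOn_adjoint_apply [CompleteSpace X] (hA : ∀ u, Continuous fun t => A t u)
    (hs : MeasurableSet s) (hsb : Bornology.IsBounded s) (η : X) :
    IntegrableOn (fun t => (A t).adjoint η) s := by
  obtain ⟨M, hM⟩ := hsb.isCompact_closure.exists_opNorm_le_of_continuousOn_apply
    fun u => (hA u).continuousOn
  refine Measure.integrableOn_of_bounded (M := M * ‖η‖) hsb.measure_lt_top.ne
    (stronglyMeasurable_adjoint_apply hA η).aestronglyMeasurable ?_
  filter_upwards [ae_restrict_mem hs] with t ht
  refine ((A t).adjoint.le_opNorm η).trans (mul_le_mul_of_nonneg_right ?_ (norm_nonneg _))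
  rw [LinearIsometryEquiv.norm_map]
  exact hM t (subset_closure ht)

theorem integrableOn_apply_of_ae_norm_le (hA : ∀ u, Continuous fun t => A t u)
    (hs : MeasurableSet s) (hsb : Bornology.IsBounded s) {g : ℝ → U} {C : ℝ}
    (hg : AEStronglyMeasurable g (volume.restrict s))
    (hgC : ∀ᵐ t ∂volume.restrict s, ‖g t‖ ≤ C) : IntegrableOn (fun t => A t (g t)) s := by
  obtain ⟨M, hM⟩ := hsb.isCompact_closure.exists_opNorm_le_of_continuousOn_apply
    fun u => (hA u).continuousOn
  have : IsFiniteMeasure (volume.restrict s) := isFiniteMeasure_restrict.2 hsb.measure_lt_top.ne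
  refine Integrable.of_bound ((continuous_uncurry_of_continuous_apply hA).comp_aestronglyMeasurable
    (aestronglyMeasurable_id.prodMk hg)) (M * C) ?_
  filter_upwards [ae_restrict_mem hs, hgC] with t ht htC
  exact ((A t).le_opNorm _).trans (mul_le_mul (hM t (subset_closure ht)) htC (norm_nonneg _)
    ((norm_nonneg _).trans (hM t (subset_closure ht))))

theorem ae_adjoint_ne_zero_of_uniqueContinuation [CompleteSpace X] {T : ℝ → X →L[ℝ] X}
    {B : U →L[ℝ] X} (hT : ∀ x, Continuous fun t => T t x) {η : X}
    (hUC : ∀ s : Set ℝ, MeasurableSet s → 0 < volume s →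
      (∀ t ∈ s, B.adjoint ((T t).adjoint η) = 0) → η = 0) (hη : η ≠ 0) (τ : ℝ) :
    ∀ᵐ t, ((T (τ - t)).comp B).adjoint η ≠ 0 := by
  have hF := stronglyMeasurable_adjoint_apply (A := fun t => (T t).comp B) (fun u => hT (B u)) η
  refine (Measure.measurePreserving_sub_left volume τ).quasiMeasurePreserving.ae
    (hF.ae_ne_zero fun s hs hpos h0 => hη (hUC s hs hpos fun t ht => ?_))
  simpa [ContinuousLinearMap.adjoint_comp] using h0 t ht

end StronglyContinuousFamily

theorem Jfun_eq_dualFunctional {X U : Type*} [NormedAddCommGroup X] [InnerProductSpace ℝ X]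
    [CompleteSpace X] [NormedAddCommGroup U] [InnerProductSpace ℝ U] [CompleteSpace U]
    (T : ℝ → X →L[ℝ] X) (B : U →L[ℝ] X) (r : ℝ) (ψ : X) (τ : ℝ) :
    Jfun T B r ψ τ =
      dualFunctional (volume.restrict (Ioc 0 τ)) (fun t => (T (τ - t)).comp B) (T τ ψ) r := by
  funext η
  simp only [Jfun, dualFunctional, ContinuousLinearMap.adjoint_comp,
    ContinuousLinearMap.comp_apply, ContinuousLinearMap.adjoint_inner_right]

theorem stmt11_general {X U : Type*} [NormedAddCommGroup X] [InnerProductSpace ℝ X] [CompleteSpace X]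
    [NormedAddCommGroup U] [InnerProductSpace ℝ U] [CompleteSpace U]
    (T : ℝ → X →L[ℝ] X) (B : U →L[ℝ] X)
    (hTcont : ∀ x : X, Continuous fun t => T t x)
    -- unique continuation
    (hUC : ∀ η : X, ∀ s : Set ℝ, MeasurableSet s → 0 < volume s →
      (∀ t ∈ s, B.adjoint ((T t).adjoint η) = 0) → η = 0)
    (r : ℝ) (hr : 0 < r) (ψ : X) (τ : ℝ)
    (hTψ : T τ ψ ∉ Metric.closedBall (0 : X) r)
    -- `η̂` is the minimizer of `J^τ`
    (ηh : X) (hηh : ∀ ξ : X, Jfun T B r ψ τ ηh ≤ Jfun T B r ψ τ ξ) :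
    -- the norm optimal control and the optimal norm `N*(τ)`
    ∀ N : ℝ, N = ∫ t in Set.Ioc 0 τ, ‖B.adjoint ((T (τ - t)).adjoint ηh)‖ →
    ∀ fh : ℝ → U, (∀ t : ℝ,
        fh t = N • (‖B.adjoint ((T (τ - t)).adjoint ηh)‖⁻¹ •
          B.adjoint ((T (τ - t)).adjoint ηh))) →
      -- `f̂` is admissible with `L^∞`-norm `N`
      ((∀ᵐ t ∂volume.restrict (Set.Ioo 0 τ), ‖fh t‖ = N) ∧
        traj T B ψ fh τ ∈ Metric.closedBall (0 : X) r ∧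
      -- `f̂` is norm optimal: `N = N*(τ)`
        (∀ g : ℝ → U, ∀ C : ℝ, 0 ≤ C →
          AEStronglyMeasurable g (volume.restrict (Set.Ioo 0 τ)) →
          (∀ᵐ t ∂volume.restrict (Set.Ioo 0 τ), ‖g t‖ ≤ C) →
          traj T B ψ g τ ∈ Metric.closedBall (0 : X) r → N ≤ C)) := by
  intro N hN fh hfh
  set μ := volume.restrict (Ioc 0 τ)
  set L : ℝ → U →L[ℝ] X := fun t => (T (τ - t)).comp B
  have hLc : ∀ u, Continuous fun t => L t u := fun u =>
    (hTcont (B u)).comp (continuous_const.sub continuous_id)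
  have hc : r < ‖T τ ψ‖ := by simpa using hTψ
  rw [Jfun_eq_dualFunctional] at hηh
  have hη := ne_zero_of_isMin_dualFunctional hr.le hc hηh
  obtain ⟨hnorm, hreach, hopt⟩ := normOptimalControl_spec hr.le hc hηh
    (integrableOn_adjoint_apply hLc measurableSet_Ioc (Metric.isBounded_Ioc 0 τ))
    (ae_restrict_of_ae (ae_adjoint_ne_zero_of_uniqueContinuation hTcont (hUC ηh) hη τ))
    fun _ _ => integrableOn_apply_of_ae_norm_le hLc measurableSet_Ioc (Metric.isBounded_Ioc 0 τ)
  have hfh' : fh = normOptimalControl μ L ηh := funext fun t => by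
    simp [hfh, hN, normOptimalControl, L, μ, ContinuousLinearMap.adjoint_comp]
  have hNL : N = ∫ t, ‖(L t).adjoint ηh‖ ∂μ := by
    simp [hN, L, μ, ContinuousLinearMap.adjoint_comp]
  rw [Measure.restrict_congr_set Ioo_ae_eq_Ioc, hNL, hfh']
  exact ⟨hnorm, hreach, fun g C _ => hopt g C⟩

/-- Suppose `T_τ ψ ∉ B(0,r)`, the unique continuation property holds, and
let `η̂` be the minimizer of `J^τ`. Then
`f̂(t) = (∫_0^τ ‖B*T*_{τ-s}η̂‖ ds) · B*T*_{τ-t}η̂ / ‖B*T*_{τ-t}η̂‖`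
is the norm optimal control for `(NP)^τ`, and `N*(τ) = ∫_0^τ ‖B*T*_{τ-t}η̂‖ dt`. -/
theorem stmt11 {X U : Type*} [NormedAddCommGroup X] [InnerProductSpace ℝ X] [CompleteSpace X]
    [NormedAddCommGroup U] [InnerProductSpace ℝ U] [CompleteSpace U]
    (T : ℝ → X →L[ℝ] X) (B : U →L[ℝ] X)
    (hT0 : T 0 = 1)
    (hTadd : ∀ s t : ℝ, 0 ≤ s → 0 ≤ t → T (s + t) = (T s).comp (T t))
    (hTcont : ∀ x : X, Continuous fun t => T t x)
    -- unique continuation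
    (hUC : ∀ η : X, ∀ s : Set ℝ, MeasurableSet s → 0 < volume s →
      (∀ t ∈ s, B.adjoint ((T t).adjoint η) = 0) → η = 0)
    (r : ℝ) (hr : 0 < r) (ψ : X) (τ : ℝ) (hτ : 0 < τ)
    (hTψ : T τ ψ ∉ Metric.closedBall (0 : X) r)
    -- `η̂` is the minimizer of `J^τ`
    (ηh : X) (hηh : ∀ ξ : X, Jfun T B r ψ τ ηh ≤ Jfun T B r ψ τ ξ) :
    -- the norm optimal control and the optimal norm `N*(τ)`
    ∀ N : ℝ, N = ∫ t in Set.Ioc 0 τ, ‖B.adjoint ((T (τ - t)).adjoint ηh)‖ →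
    ∀ fh : ℝ → U, (∀ t : ℝ,
        fh t = N • (‖B.adjoint ((T (τ - t)).adjoint ηh)‖⁻¹ •
          B.adjoint ((T (τ - t)).adjoint ηh))) →
      -- `f̂` is admissible with `L^∞`-norm `N`
      ((∀ᵐ t ∂volume.restrict (Set.Ioo 0 τ), ‖fh t‖ = N) ∧
        traj T B ψ fh τ ∈ Metric.closedBall (0 : X) r ∧
      -- `f̂` is norm optimal: `N = N*(τ)`
        (∀ g : ℝ → U, ∀ C : ℝ, 0 ≤ C →
          AEStronglyMeasurable g (volume.restrict (Set.Ioo 0 τ)) →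
          (∀ᵐ t ∂volume.restrict (Set.Ioo 0 τ), ‖g t‖ ≤ C) →
          traj T B ψ g τ ∈ Metric.closedBall (0 : X) r → N ≤ C)) :=
  stmt11_general T B hTcont hUC r hr ψ τ hTψ ηh hηh
end
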